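/- arXiv:1605.00320 — 11 statements merged into one kernel-verified Lean document; each statement's English description precedes it below -/
import Mathlib

section
/- For the CG iteration, ‖x_k − x*‖² − ‖x_{k+1} − x*‖² = (F_k + F_{k+1})‖p_{k+1}‖²/(p_{k+1}^T A p_{k+1}) for all k ≥ 0, where F_j = 2(f(x_j) − f(x*)). In particular ‖x_k − x*‖ is monotone nonincreasing. -/
open scoped InnerProductSpace

theorem stmt6
    {E : Type*} [NormedAddCommGroup E] [InnerProductSpace ℝ E]
    (A : E →L[ℝ] E) (b : E)
    (hsymm : ∀ u v : E, ⟪A u, v⟫_ℝ = ⟪u, A v⟫_ℝ)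
    (hpos : ∀ u : E, u ≠ 0 → 0 < ⟪A u, u⟫_ℝ)
    (f : E → ℝ) (hf : ∀ z : E, f z = ⟪z, A z⟫_ℝ / 2 - ⟪b, z⟫_ℝ)
    (x p r : ℕ → E) (α β : ℕ → ℝ)
    (hr0 : r 0 = b - A (x 0))
    (hp1 : p 1 = r 0)
    (hβ : ∀ k ≥ 1, β (k + 1) = ‖r k‖ ^ 2 / ‖r (k - 1)‖ ^ 2)
    (hp : ∀ k ≥ 1, p (k + 1) = β (k + 1) • p k + r k)
    (hα : ∀ k, α (k + 1) = ‖r k‖ ^ 2 / ⟪A (p (k + 1)), p (k + 1)⟫_ℝ)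
    (hx : ∀ k, x (k + 1) = x k + α (k + 1) • p (k + 1))
    (hrr : ∀ k, r (k + 1) = r k - α (k + 1) • A (p (k + 1)))
    (hnz : ∀ k, r k ≠ 0)
    (xs : E) (hxs : A xs = b)
    (F : ℕ → ℝ) (hF : ∀ k, F k = 2 * (f (x k) - f xs)) :
    ∀ k : ℕ,
      ‖x k - xs‖ ^ 2 - ‖x (k + 1) - xs‖ ^ 2 =
        (F k + F (k + 1)) * ‖p (k + 1)‖ ^ 2 / ⟪A (p (k + 1)), p (k + 1)⟫_ℝ ∧
      ‖x (k + 1) - xs‖ ≤ ‖x k - xs‖ := by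
  have hrn : ∀ k, (‖r k‖ : ℝ) ≠ 0 := fun k => norm_ne_zero_iff.2 (hnz k)
  -- residual identity
  have hres : ∀ k, r k = b - A (x k) := by
    intro k
    induction k with
    | zero => exact hr0
    | succ n ih => rw [hrr n, hx n, map_add, map_smul, ih]; abel
  have hre : ∀ k, A (x k - xs) = -(r k) := by
    intro k; rw [map_sub, hxs, hres]; abel
  -- F in terms of the error
  have hFk : ∀ k, F k = ⟪A (x k - xs), x k - xs⟫_ℝ := by
    intro k
    have h1 : ⟪A (x k), xs⟫_ℝ = ⟪b, x k⟫_ℝ := by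
      rw [hsymm, hxs, real_inner_comm]
    have h2 : ⟪xs, b⟫_ℝ = ⟪b, xs⟫_ℝ := real_inner_comm _ _
    have h3 : ⟪A (x k), x k⟫_ℝ = ⟪x k, A (x k)⟫_ℝ := real_inner_comm _ _
    rw [hF, hf, hf, map_sub, hxs, inner_sub_left, inner_sub_right, inner_sub_right,
      h1, h2, h3]
    ring
  -- orthogonality invariants
  have hPO_of : ∀ k, ⟪p (k+1), r k⟫_ℝ = ‖r k‖^2 → ⟪p (k+1), r (k+1)⟫_ℝ = 0 := by
    intro k hk
    have hpz : p (k+1) ≠ 0 := by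
      intro h
      rw [h, inner_zero_left] at hk
      exact pow_ne_zero 2 (hrn k) hk.symm
    have hc' : ⟪p (k+1), A (p (k+1))⟫_ℝ ≠ 0 := by
      rw [real_inner_comm]; exact ne_of_gt (hpos _ hpz)
    have hc'' := ne_of_gt (hpos _ hpz)
    rw [hrr k, inner_sub_right, hk, real_inner_smul_right, hα k,
      real_inner_comm (p (k+1)) (A (p (k+1))), div_mul_cancel₀ _ hc', sub_self]
  have hPR : ∀ k, ⟪p (k+1), r k⟫_ℝ = ‖r k‖^2 := by
    intro k
    induction k with
    | zero => rw [hp1, real_inner_self_eq_norm_sq]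
    | succ n ih =>
      rw [hp (n+1) (by omega), inner_add_left, real_inner_smul_left, hPO_of n ih,
        real_inner_self_eq_norm_sq]
      ring
  have hPO : ∀ k, ⟪p (k+1), r (k+1)⟫_ℝ = 0 := fun k => hPO_of k (hPR k)
  have hpz : ∀ k, p (k+1) ≠ 0 := by
    intro k h
    have hk := hPR k
    rw [h, inner_zero_left] at hk
    exact pow_ne_zero 2 (hrn k) hk.symm
  have hc : ∀ k, 0 < ⟪A (p (k+1)), p (k+1)⟫_ℝ := fun k => hpos _ (hpz k)
  have hErec : ∀ k, x (k+1) - xs = (x k - xs) + α (k+1) • p (k+1) := by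
    intro k; rw [hx k]; abel
  have hAep : ∀ k, ⟪A (x k - xs), p (k+1)⟫_ℝ = -‖r k‖^2 := by
    intro k; rw [hre k, inner_neg_left, real_inner_comm, hPR k]
  -- F recurrence
  have hFrec : ∀ k, F (k+1) = F k - α (k+1) * ‖r k‖^2 := by
    intro k
    have hα' : α (k+1) * ⟪A (p (k+1)), p (k+1)⟫_ℝ = ‖r k‖^2 := by
      rw [hα k]; exact div_mul_cancel₀ _ (ne_of_gt (hc k))
    have h2 : ⟪A (p (k+1)), x k - xs⟫_ℝ = -‖r k‖^2 := by
      rw [hsymm, real_inner_comm]; exact hAep k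
    have hexp : ⟪A ((x k - xs) + α (k+1) • p (k+1)),
        (x k - xs) + α (k+1) • p (k+1)⟫_ℝ =
        ⟪A (x k - xs), x k - xs⟫_ℝ - 2 * α (k+1) * ‖r k‖^2
          + α (k+1) * (α (k+1) * ⟪A (p (k+1)), p (k+1)⟫_ℝ) := by
      rw [map_add, map_smul]
      simp only [inner_add_left, inner_add_right, real_inner_smul_left,
        real_inner_smul_right, ContinuousLinearMap.coe_smul', Pi.smul_apply,
        smul_eq_mul, hAep k, h2]
      ring
    rw [hFk (k+1), hFk k, hErec k, hexp, hα']
    ring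
  -- key invariant
  have hEP : ∀ k, ⟪x k - xs, p (k+1)⟫_ℝ * ‖r k‖^2 = -(F k * ‖p (k+1)‖^2) := by
    intro k
    induction k with
    | zero =>
      have h0 : F 0 = -⟪r 0, x 0 - xs⟫_ℝ := by
        rw [hFk 0, hre 0, inner_neg_left]
      rw [hp1, h0, real_inner_comm]
      ring
    | succ n ih =>
      have stepA : ⟪x (n+1) - xs, p (n+1)⟫_ℝ * ‖r n‖^2
          = -(F (n+1) * ‖p (n+1)‖^2) := by
        rw [hErec n, inner_add_left, real_inner_smul_left,
          real_inner_self_eq_norm_sq, hFrec n]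
        linear_combination ih
      have hb : β (n+2) = ‖r (n+1)‖^2 / ‖r n‖^2 := by
        have := hβ (n+1) (by omega)
        simpa using this
      have hpp : p (n+2) = β (n+2) • p (n+1) + r (n+1) := hp (n+1) (by omega)
      have hnp2 : ‖p (n+2)‖^2 = β (n+2)^2 * ‖p (n+1)‖^2 + ‖r (n+1)‖^2 := by
        rw [hpp, @norm_add_sq_real, real_inner_smul_left, hPO n, norm_smul]
        simp [mul_pow, sq_abs]
      have hEr : ⟪x (n+1) - xs, r (n+1)⟫_ℝ = -F (n+1) := by
        rw [hFk (n+1), hre (n+1), inner_neg_left, real_inner_comm]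
        ring
      have hx1 : ⟪x (n+1) - xs, p (n+1)⟫_ℝ
          = -(F (n+1) * ‖p (n+1)‖^2) / ‖r n‖^2 := by
        rw [eq_div_iff (pow_ne_zero 2 (hrn n))]
        exact stepA
      rw [hnp2, hpp, inner_add_right, real_inner_smul_right, hEr, hb, hx1]
      field_simp
      ring
  have hFpos : ∀ k, 0 ≤ F k := by
    intro k
    rw [hFk k]
    rcases eq_or_ne (x k - xs) 0 with h | h
    · simp [h]
    · exact le_of_lt (hpos _ h)
  intro k
  have hcne := ne_of_gt (hc k)
  have hdiff : ‖x k - xs‖ ^ 2 - ‖x (k + 1) - xs‖ ^ 2 =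
      (F k + F (k + 1)) * ‖p (k + 1)‖ ^ 2 / ⟪A (p (k + 1)), p (k + 1)⟫_ℝ := by
    have hx1 : ⟪x k - xs, p (k+1)⟫_ℝ = -(F k * ‖p (k+1)‖^2) / ‖r k‖^2 := by
      rw [eq_div_iff (pow_ne_zero 2 (hrn k))]
      exact hEP k
    rw [hErec k, @norm_add_sq_real, real_inner_smul_right, norm_smul, hx1,
      hFrec k, hα k]
    rw [Real.norm_eq_abs, mul_pow, sq_abs]
    field_simp [hrn k]
    ring
  refine ⟨hdiff, ?_⟩
  have hnn : 0 ≤ (F k + F (k + 1)) * ‖p (k + 1)‖ ^ 2 / ⟪A (p (k + 1)), p (k + 1)⟫_ℝ :=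
    div_nonneg (mul_nonneg (add_nonneg (hFpos k) (hFpos (k+1))) (sq_nonneg _))
      (le_of_lt (hc k))
  have h2 : ‖x (k + 1) - xs‖ ^ 2 ≤ ‖x k - xs‖ ^ 2 := by linarith [hdiff ▸ hnn]
  exact (pow_le_pow_iff_left₀ (norm_nonneg _) (norm_nonneg _) two_ne_zero).1 h2
end

section
/- For the CG iteration with ρ_k = F_k/(α_k‖r_{k−1}‖²) and s_k = x_k − x_{k−1} = α_k p_k, one has ‖x_k − x*‖² − ‖x_k + ρ_k s_k − x*‖² = F_k²‖p_k‖²/‖r_{k−1}‖⁴ for k ≥ 1. In particular ‖x_k + ρ_k s_k − x*‖ ≤ ‖x_k − x*‖. -/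
open scoped InnerProductSpace

theorem stmt7
    {E : Type*} [NormedAddCommGroup E] [InnerProductSpace ℝ E]
    (A : E →L[ℝ] E) (b : E)
    (hsymm : ∀ u v : E, ⟪A u, v⟫_ℝ = ⟪u, A v⟫_ℝ)
    (hpos : ∀ u : E, u ≠ 0 → 0 < ⟪A u, u⟫_ℝ)
    (f : E → ℝ) (hf : ∀ z : E, f z = ⟪z, A z⟫_ℝ / 2 - ⟪b, z⟫_ℝ)
    (x p r : ℕ → E) (α β : ℕ → ℝ)
    (hr0 : r 0 = b - A (x 0))
    (hp1 : p 1 = r 0)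
    (hβ : ∀ k ≥ 1, β (k + 1) = ‖r k‖ ^ 2 / ‖r (k - 1)‖ ^ 2)
    (hp : ∀ k ≥ 1, p (k + 1) = β (k + 1) • p k + r k)
    (hα : ∀ k, α (k + 1) = ‖r k‖ ^ 2 / ⟪A (p (k + 1)), p (k + 1)⟫_ℝ)
    (hx : ∀ k, x (k + 1) = x k + α (k + 1) • p (k + 1))
    (hrr : ∀ k, r (k + 1) = r k - α (k + 1) • A (p (k + 1)))
    (hnz : ∀ k, r k ≠ 0)
    (xs : E) (hxs : A xs = b)
    (F : ℕ → ℝ) (hF : ∀ k, F k = 2 * (f (x k) - f xs))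
    (s : ℕ → E) (hs : ∀ k ≥ 1, s k = α k • p k)
    (ρ : ℕ → ℝ) (hρ : ∀ k ≥ 1, ρ k = F k / (α k * ‖r (k - 1)‖ ^ 2)) :
    ∀ k ≥ 1,
      ‖x k - xs‖ ^ 2 - ‖x k + ρ k • s k - xs‖ ^ 2 =
        F k ^ 2 * ‖p k‖ ^ 2 / ‖r (k - 1)‖ ^ 4 ∧
      ‖x k + ρ k • s k - xs‖ ≤ ‖x k - xs‖ := by
  -- residual formula
  have hrb : ∀ k, r k = b - A (x k) := by
    intro k
    induction k with
    | zero => exact hr0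
    | succ n ih =>
      rw [hrr n, ih, hx n, map_add, map_smul]
      abel
  have hAe : ∀ k, A (x k - xs) = -(r k) := by
    intro k
    rw [hrb k, map_sub, hxs]
    abel
  have hrn : ∀ k, (0:ℝ) < ‖r k‖ ^ 2 := fun k =>
    pow_pos (norm_pos_iff.mpr (hnz k)) 2
  have hne : ∀ k, ‖r k‖ ≠ 0 := fun k => norm_ne_zero_iff.mpr (hnz k)
  -- energy formula for F
  have hFe : ∀ k, F k = ⟪A (x k - xs), x k - xs⟫_ℝ := by
    intro k
    rw [hF, hf, hf, ← hxs]
    have a1 := hsymm (x k) (x k)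
    have a2 := hsymm (x k) xs
    have a3 := hsymm xs (x k)
    have a4 := real_inner_comm (A (x k)) xs
    have a5 := real_inner_comm (A xs) (x k)
    have a6 := hsymm xs xs
    simp only [map_sub, inner_sub_left, inner_sub_right]
    linarith
  have hFr : ∀ k, ⟪r k, x k - xs⟫_ℝ = -F k := by
    intro k
    rw [hFe k, hAe k, inner_neg_left]
    ring
  -- orthogonality facts, jointly by induction
  have hpr : ∀ j, ⟪r j, p (j+1)⟫_ℝ = ‖r j‖ ^ 2 ∧ ⟪p (j+1), r (j+1)⟫_ℝ = 0 := by
    have step : ∀ j, ⟪r j, p (j+1)⟫_ℝ = ‖r j‖ ^ 2 → ⟪p (j+1), r (j+1)⟫_ℝ = 0 := by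
      intro j h1
      have hpne : p (j+1) ≠ 0 := by
        intro h0
        rw [h0, inner_zero_right] at h1
        exact (hrn j).ne' h1.symm
      have hApp := hpos _ hpne
      have hαv : α (j+1) * ⟪A (p (j+1)), p (j+1)⟫_ℝ = ‖r j‖ ^ 2 := by
        rw [hα j]
        field_simp
      rw [hrr j, inner_sub_right, real_inner_smul_right,
        real_inner_comm (r j) (p (j+1)), h1,
        real_inner_comm (A (p (j+1))) (p (j+1))]
      linarith
    intro j
    induction j with
    | zero =>
      have h1 : ⟪r 0, p 1⟫_ℝ = ‖r 0‖ ^ 2 := by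
        rw [hp1, real_inner_self_eq_norm_sq]
      exact ⟨h1, step 0 h1⟩
    | succ n ih =>
      have h1 : ⟪r (n+1), p (n+2)⟫_ℝ = ‖r (n+1)‖ ^ 2 := by
        rw [hp (n+1) (by omega), inner_add_right, real_inner_smul_right,
          real_inner_comm (p (n+1)) (r (n+1)), ih.2, real_inner_self_eq_norm_sq]
        ring
      exact ⟨h1, step (n+1) h1⟩
  have hpne : ∀ j, p (j+1) ≠ 0 := by
    intro j h0
    have h1 := (hpr j).1
    rw [h0, inner_zero_right] at h1
    exact (hrn j).ne' h1.symm
  have hαv : ∀ j, α (j+1) * ⟪A (p (j+1)), p (j+1)⟫_ℝ = ‖r j‖ ^ 2 := by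
    intro j
    have := hpos _ (hpne j)
    rw [hα j]
    field_simp
  have hαpos : ∀ j, 0 < α (j+1) := by
    intro j
    have h := hpos _ (hpne j)
    have := hαv j
    nlinarith [hrn j]
  -- F recursion
  have hFrec : ∀ j, F (j+1) = F j - α (j+1) * ‖r j‖ ^ 2 := by
    intro j
    have hx' : x (j+1) - xs = (x j - xs) + α (j+1) • p (j+1) := by
      rw [hx j]; abel
    have e1 : ⟪A (x j - xs), p (j+1)⟫_ℝ = -‖r j‖ ^ 2 := by
      rw [hAe j, inner_neg_left, (hpr j).1]
    have e2 : ⟪A (p (j+1)), x j - xs⟫_ℝ = -‖r j‖ ^ 2 := by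
      rw [hsymm, real_inner_comm]; exact e1
    have e3 := hαv j
    rw [hFe (j+1), hx', map_add, map_smul, inner_add_left, inner_add_right,
      inner_add_right, real_inner_smul_left, real_inner_smul_right,
      real_inner_smul_left, real_inner_smul_right, e1, e2, ← hFe j]
    linear_combination α (j+1) * e3
  -- the key identity
  have key : ∀ j, ⟪p (j+1), x (j+1) - xs⟫_ℝ = -F (j+1) * ‖p (j+1)‖ ^ 2 / ‖r j‖ ^ 2 := by
    intro j
    induction j with
    | zero =>
      have hx' : x 1 - xs = (x 0 - xs) + α 1 • p 1 := by rw [hx 0]; abel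
      have e0 : ⟪p 1, x 0 - xs⟫_ℝ = -F 0 := by
        rw [hp1, hFr 0]
      rw [hx', inner_add_right, real_inner_smul_right, e0,
        real_inner_self_eq_norm_sq, hp1, hFrec 0]
      have := hne 0
      field_simp
      ring
    | succ n ih =>
      have hn := hne n
      have hn1 := hne (n+1)
      have hβv : β (n+2) = ‖r (n+1)‖ ^ 2 / ‖r n‖ ^ 2 := by
        have := hβ (n+1) (by omega)
        simpa using this
      have hpv : p (n+2) = β (n+2) • p (n+1) + r (n+1) := hp (n+1) (by omega)
      have hx' : x (n+2) - xs = (x (n+1) - xs) + α (n+2) • p (n+2) := by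
        rw [hx (n+1)]; abel
      have hnp : ‖p (n+2)‖ ^ 2 = β (n+2) ^ 2 * ‖p (n+1)‖ ^ 2 + ‖r (n+1)‖ ^ 2 := by
        rw [hpv, norm_add_sq_real, real_inner_smul_left, (hpr n).2,
          norm_smul]
        rw [mul_pow]
        have : |β (n+2)| ^ 2 = β (n+2) ^ 2 := sq_abs _
        rw [Real.norm_eq_abs, this]
        ring
      have e1 : ⟪p (n+2), x (n+1) - xs⟫_ℝ =
          β (n+2) * (-F (n+1) * ‖p (n+1)‖ ^ 2 / ‖r n‖ ^ 2) - F (n+1) := by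
        rw [hpv, inner_add_left, real_inner_smul_left, ih, hFr (n+1)]
        ring
      rw [hx', inner_add_right, real_inner_smul_right, real_inner_self_eq_norm_sq,
        e1, hnp, hFrec (n+1), hβv]
      field_simp
      ring
  -- main statement
  intro k hk
  obtain ⟨j, rfl⟩ : ∃ j, k = j + 1 := ⟨k - 1, by omega⟩
  have hidx : j + 1 - 1 = j := rfl
  have hαne := (hαpos j).ne'
  have hn := hne j
  have hρs : ρ (j+1) • s (j+1) = (F (j+1) / ‖r j‖ ^ 2) • p (j+1) := by
    rw [hρ (j+1) (by omega), hs (j+1) (by omega), hidx, smul_smul]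
    congr 1
    field_simp
  have hx2 : x (j+1) + ρ (j+1) • s (j+1) - xs =
      (x (j+1) - xs) + (F (j+1) / ‖r j‖ ^ 2) • p (j+1) := by
    rw [hρs]; abel
  have expand : ‖x (j+1) + ρ (j+1) • s (j+1) - xs‖ ^ 2 =
      ‖x (j+1) - xs‖ ^ 2 + 2 * ((F (j+1) / ‖r j‖ ^ 2) *
        (-F (j+1) * ‖p (j+1)‖ ^ 2 / ‖r j‖ ^ 2)) +
        (F (j+1) / ‖r j‖ ^ 2) ^ 2 * ‖p (j+1)‖ ^ 2 := by
    rw [hx2, norm_add_sq_real, real_inner_smul_right,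
      real_inner_comm, key j, norm_smul, Real.norm_eq_abs, mul_pow, sq_abs]
  have main : ‖x (j+1) - xs‖ ^ 2 - ‖x (j+1) + ρ (j+1) • s (j+1) - xs‖ ^ 2 =
      F (j+1) ^ 2 * ‖p (j+1)‖ ^ 2 / ‖r (j+1-1)‖ ^ 4 := by
    rw [hidx, expand]
    field_simp
    ring
  refine ⟨main, ?_⟩
  have h1 : (0:ℝ) ≤ F (j+1) ^ 2 * ‖p (j+1)‖ ^ 2 / ‖r (j+1-1)‖ ^ 4 := by positivity
  nlinarith [norm_nonneg (x (j+1) + ρ (j+1) • s (j+1) - xs),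
    norm_nonneg (x (j+1) - xs), main, h1]
end

section
/- For the CG iteration with w_k = x_k + ρ_k s_k − x* (ρ_k = F_k/(α_k‖r_{k−1}‖²), s_k = α_k p_k), one has ‖w_{k+1}‖² − ‖w_k‖² = −F_k²/‖r_k‖² for all k ≥ 1. -/
open scoped InnerProductSpace

theorem stmt8
    {E : Type*} [NormedAddCommGroup E] [InnerProductSpace ℝ E]
    (A : E →L[ℝ] E) (b : E)
    (hsymm : ∀ u v : E, ⟪A u, v⟫_ℝ = ⟪u, A v⟫_ℝ)
    (hpos : ∀ u : E, u ≠ 0 → 0 < ⟪A u, u⟫_ℝ)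
    (f : E → ℝ) (hf : ∀ z : E, f z = ⟪z, A z⟫_ℝ / 2 - ⟪b, z⟫_ℝ)
    (x p r : ℕ → E) (α β : ℕ → ℝ)
    (hr0 : r 0 = b - A (x 0))
    (hp1 : p 1 = r 0)
    (hβ : ∀ k ≥ 1, β (k + 1) = ‖r k‖ ^ 2 / ‖r (k - 1)‖ ^ 2)
    (hp : ∀ k ≥ 1, p (k + 1) = β (k + 1) • p k + r k)
    (hα : ∀ k, α (k + 1) = ‖r k‖ ^ 2 / ⟪A (p (k + 1)), p (k + 1)⟫_ℝ)
    (hx : ∀ k, x (k + 1) = x k + α (k + 1) • p (k + 1))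
    (hrr : ∀ k, r (k + 1) = r k - α (k + 1) • A (p (k + 1)))
    (hnz : ∀ k, r k ≠ 0)
    (xs : E) (hxs : A xs = b)
    (F : ℕ → ℝ) (hF : ∀ k, F k = 2 * (f (x k) - f xs))
    (s : ℕ → E) (hs : ∀ k ≥ 1, s k = α k • p k)
    (ρ : ℕ → ℝ) (hρ : ∀ k ≥ 1, ρ k = F k / (α k * ‖r (k - 1)‖ ^ 2))
    (w : ℕ → E) (hw : ∀ k ≥ 1, w k = x k + ρ k • s k - xs) :
    ∀ k ≥ 1, ‖w (k + 1)‖ ^ 2 - ‖w k‖ ^ 2 = -(F k ^ 2 / ‖r k‖ ^ 2) := by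
  have rne : ∀ j, ‖r j‖ ^ 2 ≠ 0 := fun j =>
    pow_ne_zero _ (norm_ne_zero_iff.mpr (hnz j))
  have rpos : ∀ j, 0 < ‖r j‖ ^ 2 := fun j =>
    lt_of_le_of_ne (sq_nonneg _) (Ne.symm (rne j))
  -- residual identity
  have hr : ∀ k, r k = b - A (x k) := by
    intro k
    induction k with
    | zero => exact hr0
    | succ n ih =>
      rw [hrr, hx, map_add, map_smul, ih]
      abel
  -- orthogonality facts
  have key : ∀ k, ⟪p (k+1), r k⟫_ℝ = ‖r k‖ ^ 2 ∧ ⟪p (k+1), r (k+1)⟫_ℝ = 0 := by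
    intro k
    induction k with
    | zero =>
      have h1 : ⟪p 1, r 0⟫_ℝ = ‖r 0‖ ^ 2 := by
        rw [hp1, real_inner_self_eq_norm_sq]
      refine ⟨h1, ?_⟩
      have hpne : p 1 ≠ 0 := by rw [hp1]; exact hnz 0
      have hApp : ⟪A (p 1), p 1⟫_ℝ ≠ 0 := (hpos _ hpne).ne'
      have hApp' : ⟪p 1, A (p 1)⟫_ℝ ≠ 0 := by rw [real_inner_comm]; exact hApp
      rw [hrr 0, inner_sub_right, real_inner_smul_right, h1, hα 0,
        real_inner_comm (p 1) (A (p 1)), div_mul_cancel₀ _ hApp', sub_self]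
    | succ n ih =>
      obtain ⟨ih1, ih2⟩ := ih
      have h1 : ⟪p (n+2), r (n+1)⟫_ℝ = ‖r (n+1)‖ ^ 2 := by
        rw [hp (n+1) (by omega), inner_add_left, real_inner_smul_left, ih2,
          real_inner_self_eq_norm_sq]
        ring
      refine ⟨h1, ?_⟩
      have hpne : p (n+2) ≠ 0 := by
        intro h
        apply rne (n+1)
        rw [← h1, h, inner_zero_left]
      have hApp : ⟪A (p (n+2)), p (n+2)⟫_ℝ ≠ 0 := (hpos _ hpne).ne'
      have hApp' : ⟪p (n+2), A (p (n+2))⟫_ℝ ≠ 0 := by rw [real_inner_comm]; exact hApp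
      have hq := hα (n+1)
      simp only [show n+1+1 = n+2 from rfl] at hq
      rw [hrr (n+1), inner_sub_right, real_inner_smul_right, h1, hq,
        real_inner_comm (p (n+2)) (A (p (n+2))), div_mul_cancel₀ _ hApp', sub_self]
  have pne : ∀ k, p (k+1) ≠ 0 := by
    intro k h
    apply rne k
    rw [← (key k).1, h, inner_zero_left]
  have αpos : ∀ k, 0 < α (k+1) := by
    intro k
    rw [hα k]
    exact div_pos (rpos k) (hpos _ (pne k))
  -- F via residual
  have hFval : ∀ k, F k = ⟪r k, xs - x k⟫_ℝ := by
    intro k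
    have e1 : ⟪A (x k), xs⟫_ℝ = ⟪b, x k⟫_ℝ := by
      rw [hsymm, hxs, real_inner_comm]
    have e2 : ⟪xs, A xs⟫_ℝ = ⟪b, xs⟫_ℝ := by rw [hxs, real_inner_comm]
    rw [hF, hf, hf, hr, inner_sub_left, inner_sub_right, inner_sub_right, e1, e2,
      real_inner_comm (x k) (A (x k))]
    ring
  have αA : ∀ k, α (k+1) * ⟪A (p (k+1)), p (k+1)⟫_ℝ = ‖r k‖ ^ 2 := by
    intro k
    rw [hα k, div_mul_cancel₀ _ (hpos _ (pne k)).ne']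
  -- decrease of F
  have hFd : ∀ k, F (k+1) = F k - α (k+1) * ‖r k‖ ^ 2 := by
    intro k
    have e3 : ⟪A (p (k+1)), xs - x k⟫_ℝ = ‖r k‖ ^ 2 := by
      rw [hsymm, map_sub, hxs, ← hr, (key k).1]
    have e4 : ⟪r (k+1), p (k+1)⟫_ℝ = 0 := by
      rw [real_inner_comm]; exact (key k).2
    have e5 : xs - x (k+1) = (xs - x k) - α (k+1) • p (k+1) := by
      rw [hx]; abel
    have e6 : ⟪r (k+1), xs - x k⟫_ℝ = F k - α (k+1) * ‖r k‖ ^ 2 := by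
      rw [hrr, inner_sub_left, real_inner_smul_left, e3, ← hFval]
    rw [hFval (k+1), e5, inner_sub_right, real_inner_smul_right, e4, e6]
    ring
  -- scalar cancellation helpers
  have cancel1 : ∀ t n a : ℝ, a ≠ 0 → t / (a * n) * a = t / n := by
    intro t n a ha
    rw [div_mul_eq_mul_div, mul_comm a n, mul_div_mul_right _ _ ha]
  have cancel3 : ∀ t n n' : ℝ, n ≠ 0 → t / n * (n / n') = t / n' := by
    intro t n n' hn
    rw [div_mul_div_comm, mul_comm t n, mul_div_mul_left _ _ hn]
  -- main computation
  intro k hk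
  obtain ⟨m, rfl⟩ : ∃ m, k = m + 1 := ⟨k - 1, (Nat.succ_pred_eq_of_pos hk).symm⟩
  set c : ℝ := F (m+1) / ‖r (m+1)‖ ^ 2 with hc
  have hα1 : α (m+1) ≠ 0 := (αpos m).ne'
  have hα2 : α (m+2) ≠ 0 := (αpos (m+1)).ne'
  have hw1 : w (m+1) = (x (m+1) - xs) + (F (m+1) / ‖r m‖ ^ 2) • p (m+1) := by
    rw [hw (m+1) (by omega), hρ (m+1) (by omega), hs (m+1) (by omega), smul_smul]
    have : F (m+1) / (α (m+1) * ‖r ((m+1) - 1)‖ ^ 2) * α (m+1)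
        = F (m+1) / ‖r m‖ ^ 2 := by
      simp only [Nat.add_sub_cancel]
      exact cancel1 _ _ _ hα1
    rw [this]; abel
  have hw2 : w (m+2) = (x (m+1) - xs) + c • p (m+2) := by
    rw [hw (m+2) (by omega), hρ (m+2) (by omega), hs (m+2) (by omega), smul_smul,
      hx (m+1)]
    have e7 : F (m+2) / (α (m+2) * ‖r ((m+2) - 1)‖ ^ 2) * α (m+2)
        = c - α (m+2) := by
      simp only [show m+2-1 = m+1 from rfl, hc]
      have hFd' := hFd (m+1)
      simp only [show m+1+1 = m+2 from rfl] at hFd'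
      rw [hFd', cancel1 _ _ _ hα2, sub_div,
        mul_div_assoc, div_self (rne (m+1)), mul_one]
    rw [e7, sub_smul]
    abel
  have hw3 : w (m+1) = (x (m+1) - xs) + c • p (m+2) - c • r (m+1) := by
    rw [hw1, hp (m+1) (by omega), smul_add, hβ (m+1) (by omega), smul_smul]
    have : c * (‖r (m+1)‖ ^ 2 / ‖r ((m+1) - 1)‖ ^ 2) = F (m+1) / ‖r m‖ ^ 2 := by
      simp only [Nat.add_sub_cancel, hc]
      exact cancel3 _ _ _ (rne (m+1))
    rw [this]
    abel
  have hdiff : w (m+2) = w (m+1) + c • r (m+1) := by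
    rw [hw2, hw3]; abel
  have hwr : ⟪w (m+1), r (m+1)⟫_ℝ = -F (m+1) := by
    have e8 : ⟪x (m+1) - xs, r (m+1)⟫_ℝ = -F (m+1) := by
      rw [real_inner_comm, hFval (m+1), ← inner_neg_right, neg_sub]
    have hk1 := (key (m+1)).1
    simp only [show m+1+1 = m+2 from rfl] at hk1
    rw [hw3, inner_sub_left, inner_add_left, real_inner_smul_left,
      real_inner_smul_left, hk1, real_inner_self_eq_norm_sq, e8]
    ring
  have goal : ‖w (m+1+1)‖ ^ 2 - ‖w (m+1)‖ ^ 2 = -(F (m+1) ^ 2 / ‖r (m+1)‖ ^ 2) := by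
    rw [show m+1+1 = m+2 from rfl, hdiff, norm_add_sq_real, real_inner_smul_right,
      hwr, norm_smul, mul_pow, Real.norm_eq_abs, sq_abs, hc]
    have hn := rne (m+1)
    field_simp
    ring
  exact goal
end

section
/- Define the CG potential Ψ_k = ‖w_k‖² + F_k/ℓ where w_k = x_k + ρ_k s_k − x*, F_k = 2(f(x_k) − f(x*)), ℓ = λ_min(A), L = λ_max(A). Then (1 + √(ℓ/L)) Ψ_{k+1} ≤ Ψ_k for all k ≥ 1. -/
/-!
Write `e = x_k - x*`, so that `A e = -r_k` and `F_k = ⟪A e, e⟫`. The CG orthogonality relations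
show that `w_{k+1} = w_k + (F_k / ‖r_k‖²) r_k` is orthogonal to both `r_k` and `p_k`, so `w_{k+1}`
is no longer than any vector of `w_k + span {r_k, p_k}`, in particular than `(1 - c) w_k + c z`
with `z = e + r_k / ℓ` and `c = √(ℓ/L)`. Expanding this convex combination, the bounds
`‖z‖² ≤ ‖r_k‖²/ℓ² - F_k/ℓ` (from `ℓ‖e‖² ≤ F_k`) and `‖w_k - z‖ ≥ ‖r_k‖/ℓ` (Cauchy–Schwarz against
`r_k`) give `‖w_{k+1}‖² ≤ (1 - c)‖w_k‖² - c F_k/ℓ + c² ‖r_k‖²/ℓ²`. The CG step is at least as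
long as the gradient step `1/L`, so `F_{k+1} ≤ F_k - ‖r_k‖²/L = F_k - c² ‖r_k‖²/ℓ`; adding up,
`Ψ_{k+1} ≤ (1 - c) Ψ_k`, and `(1 + c)(1 - c) ≤ 1`.
-/

open scoped InnerProductSpace

section InnerProduct

variable {E : Type*} [NormedAddCommGroup E] [InnerProductSpace ℝ E]

theorem norm_sq_le_norm_add_sq_of_inner_eq_zero {u v : E} (h : ⟪u, v⟫_ℝ = 0) :
    ‖u‖ ^ 2 ≤ ‖u + v‖ ^ 2 := by
  rw [norm_add_sq_real, h]
  linarith [sq_nonneg ‖v‖]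

theorem norm_one_sub_smul_add_smul_sq (c : ℝ) (u v : E) :
    ‖(1 - c) • u + c • v‖ ^ 2
      = (1 - c) * ‖u‖ ^ 2 + c * ‖v‖ ^ 2 - (1 - c) * c * ‖u - v‖ ^ 2 := by
  rw [norm_add_sq_real, norm_sub_sq_real, norm_smul, norm_smul, real_inner_smul_left,
    real_inner_smul_right, Real.norm_eq_abs, Real.norm_eq_abs, mul_pow, mul_pow, sq_abs, sq_abs]
  ring

theorem sq_mul_norm_sq_le_of_inner_eq {u v : E} {t : ℝ} (h : ⟪u, v⟫_ℝ = t * ‖v‖ ^ 2) :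
    t ^ 2 * ‖v‖ ^ 2 ≤ ‖u‖ ^ 2 := by
  rcases eq_or_ne v 0 with rfl | hv
  · simp
  have hcs := real_inner_mul_inner_self_le u v
  rw [h, real_inner_self_eq_norm_sq, real_inner_self_eq_norm_sq] at hcs
  refine le_of_mul_le_mul_right ?_ (by positivity : 0 < ‖v‖ ^ 2)
  linarith

theorem inner_map_self_le_of_inner_map_eq_zero {A : E →L[ℝ] E}
    (hsymm : ∀ u v : E, ⟪A u, v⟫_ℝ = ⟪u, A v⟫_ℝ) {u v : E} (hv : 0 ≤ ⟪A v, v⟫_ℝ)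
    (huv : ⟪A u, v⟫_ℝ = 0) (t : ℝ) :
    ⟪A u, u⟫_ℝ ≤ ⟪A (u + t • v), u + t • v⟫_ℝ := by
  have hvu : ⟪A v, u⟫_ℝ = 0 := by rw [hsymm, real_inner_comm, huv]
  simp only [map_add, map_smul, inner_add_left, inner_add_right, real_inner_smul_left,
    real_inner_smul_right, huv, hvu]
  nlinarith [mul_nonneg (sq_nonneg t) hv]

theorem norm_sq_le_of_orthogonal_update {ℓ c a b F : ℝ} (hℓ : 0 < ℓ) (hc0 : 0 ≤ c) (hc1 : c ≤ 1)
    {e p r w w' : E} (hw : w = e + a • p) (hw' : w' = w + b • r)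
    (hpr : ⟪p, r⟫_ℝ = 0) (her : ⟪e, r⟫_ℝ = -F) (he : ℓ * ‖e‖ ^ 2 ≤ F)
    (hw'p : ⟪w', p⟫_ℝ = 0) (hw'r : ⟪w', r⟫_ℝ = 0) :
    ‖w'‖ ^ 2 ≤ (1 - c) * ‖w‖ ^ 2 - c * (F / ℓ) + c ^ 2 * (‖r‖ ^ 2 / ℓ ^ 2) := by
  set z := e + ℓ⁻¹ • r with hz
  have hz_le : ‖z‖ ^ 2 ≤ ‖r‖ ^ 2 / ℓ ^ 2 - F / ℓ := by
    have he' : ‖e‖ ^ 2 ≤ F / ℓ := by rw [le_div_iff₀ hℓ]; linarith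
    rw [hz, norm_add_sq_real, real_inner_smul_right, her, norm_smul, mul_pow, Real.norm_eq_abs,
      sq_abs]
    have : F / ℓ = ℓ⁻¹ * F := by ring
    have : ‖r‖ ^ 2 / ℓ ^ 2 = ℓ⁻¹ ^ 2 * ‖r‖ ^ 2 := by ring
    linarith
  have hwz : ‖r‖ ^ 2 / ℓ ^ 2 ≤ ‖w - z‖ ^ 2 := by
    have h : ⟪w - z, r⟫_ℝ = -ℓ⁻¹ * ‖r‖ ^ 2 := by
      rw [hw, hz, inner_sub_left, inner_add_left, inner_add_left, real_inner_smul_left,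
        real_inner_smul_left, hpr, real_inner_self_eq_norm_sq]
      ring
    have := sq_mul_norm_sq_le_of_inner_eq h
    rwa [neg_sq, inv_pow, ← div_eq_inv_mul] at this
  have hproj : ‖w'‖ ^ 2 ≤ ‖(1 - c) • w + c • z‖ ^ 2 := by
    have hdecomp : (1 - c) • w + c • z = w' + ((c * ℓ⁻¹ - b) • r - (c * a) • p) := by
      rw [hw', hw, hz]
      module
    rw [hdecomp]
    refine norm_sq_le_norm_add_sq_of_inner_eq_zero ?_
    rw [inner_sub_right, real_inner_smul_right, real_inner_smul_right, hw'p, hw'r]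
    ring
  rw [norm_one_sub_smul_add_smul_sq] at hproj
  have h1 := mul_le_mul_of_nonneg_left hz_le hc0
  have h2 := mul_le_mul_of_nonneg_left hwz (mul_nonneg (sub_nonneg.2 hc1) hc0)
  linarith

end InnerProduct

section ConjugateGradient

variable {E : Type*} [NormedAddCommGroup E] [InnerProductSpace ℝ E]

structure IsCGIteration (A : E →L[ℝ] E) (b : E) (x p r : ℕ → E) (α β : ℕ → ℝ) : Prop where
  residual_zero : r 0 = b - A (x 0)
  direction_one : p 1 = r 0
  coeff_succ_succ : ∀ n, β (n + 2) = ‖r (n + 1)‖ ^ 2 / ‖r n‖ ^ 2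
  direction_succ_succ : ∀ n, p (n + 2) = β (n + 2) • p (n + 1) + r (n + 1)
  step_succ : ∀ n, α (n + 1) = ‖r n‖ ^ 2 / ⟪A (p (n + 1)), p (n + 1)⟫_ℝ
  iterate_succ : ∀ n, x (n + 1) = x n + α (n + 1) • p (n + 1)
  residual_succ : ∀ n, r (n + 1) = r n - α (n + 1) • A (p (n + 1))

def energyGap (A : E →L[ℝ] E) (xs z : E) : ℝ := ⟪A (z - xs), z - xs⟫_ℝ

theorem two_mul_sub_eq_energyGap {A : E →L[ℝ] E} (hsymm : ∀ u v : E, ⟪A u, v⟫_ℝ = ⟪u, A v⟫_ℝ)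
    {b xs : E} (hxs : A xs = b) {f : E → ℝ} (hf : ∀ z : E, f z = ⟪z, A z⟫_ℝ / 2 - ⟪b, z⟫_ℝ)
    (z : E) : 2 * (f z - f xs) = energyGap A xs z := by
  have hzxs : ⟪A z, xs⟫_ℝ = ⟪b, z⟫_ℝ := by rw [hsymm, hxs, real_inner_comm]
  rw [energyGap, hf, hf, map_sub, hxs]
  simp only [inner_sub_left, inner_sub_right]
  rw [hzxs, real_inner_comm (A z) z, real_inner_comm xs b]
  ring

/-- The paper's `w_{n+1} = x_{n+1} + ρ_{n+1} s_{n+1} - x*`,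
since `ρ_{n+1} α_{n+1} = F_{n+1} / ‖r_n‖²`. -/
noncomputable def shiftedError (A : E →L[ℝ] E) (xs : E) (x p r : ℕ → E) (n : ℕ) : E :=
  (x (n + 1) - xs) + (energyGap A xs (x (n + 1)) / ‖r n‖ ^ 2) • p (n + 1)

namespace IsCGIteration

variable {A : E →L[ℝ] E} {b : E} {x p r : ℕ → E} {α β : ℕ → ℝ}

theorem residual_eq (hcg : IsCGIteration A b x p r α β) (n : ℕ) : r n = b - A (x n) := by
  induction n with
  | zero => exact hcg.residual_zero
  | succ n ih =>
    rw [hcg.residual_succ, hcg.iterate_succ, map_add, map_smul, ih]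
    abel

theorem map_error (hcg : IsCGIteration A b x p r α β) {xs : E} (hxs : A xs = b) (n : ℕ) :
    A (x n - xs) = -r n := by
  rw [map_sub, hxs, hcg.residual_eq]
  abel

theorem inner_error_residual (hcg : IsCGIteration A b x p r α β) {xs : E} (hxs : A xs = b)
    (n : ℕ) : ⟪x n - xs, r n⟫_ℝ = -energyGap A xs (x n) := by
  rw [energyGap, hcg.map_error hxs, inner_neg_left, neg_neg, real_inner_comm]

theorem step_mul_curvature_of_ne_zero (hcg : IsCGIteration A b x p r α β) {n : ℕ}
    (hQ : ⟪A (p (n + 1)), p (n + 1)⟫_ℝ ≠ 0) :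
    α (n + 1) * ⟪A (p (n + 1)), p (n + 1)⟫_ℝ = ‖r n‖ ^ 2 := by
  rw [hcg.step_succ, div_mul_cancel₀ _ hQ]

theorem curvature_pos_of_inner_residual_direction (hpos : ∀ u : E, u ≠ 0 → 0 < ⟪A u, u⟫_ℝ)
    {n : ℕ} (hr : r n ≠ 0) (h : ⟪r n, p (n + 1)⟫_ℝ = ‖r n‖ ^ 2) :
    0 < ⟪A (p (n + 1)), p (n + 1)⟫_ℝ := by
  refine hpos _ fun hp => hr ?_
  rw [hp, inner_zero_right, eq_comm, sq_eq_zero_iff, norm_eq_zero] at h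
  exact h

theorem inner_residual_succ_direction_of_inner_residual_direction
    (hcg : IsCGIteration A b x p r α β) {n : ℕ} (hQ : ⟪A (p (n + 1)), p (n + 1)⟫_ℝ ≠ 0)
    (h : ⟪r n, p (n + 1)⟫_ℝ = ‖r n‖ ^ 2) : ⟪r (n + 1), p (n + 1)⟫_ℝ = 0 := by
  rw [hcg.residual_succ, inner_sub_left, real_inner_smul_left, h,
    hcg.step_mul_curvature_of_ne_zero hQ, sub_self]

theorem inner_map_direction_succ_of_inner_residual_succ (hcg : IsCGIteration A b x p r α β)
    (hsymm : ∀ u v : E, ⟪A u, v⟫_ℝ = ⟪u, A v⟫_ℝ) {n : ℕ}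
    (hQ : ⟪A (p (n + 1)), p (n + 1)⟫_ℝ ≠ 0) (hr : r n ≠ 0)
    (h : ⟪r (n + 1), r n⟫_ℝ = 0) : ⟪A (p (n + 2)), p (n + 1)⟫_ℝ = 0 := by
  have hαQ := hcg.step_mul_curvature_of_ne_zero hQ
  have hα : α (n + 1) ≠ 0 := by
    rintro hα
    rw [hα, zero_mul, eq_comm, sq_eq_zero_iff, norm_eq_zero] at hαQ
    exact hr hαQ
  have hβ : β (n + 2) * ‖r n‖ ^ 2 = ‖r (n + 1)‖ ^ 2 := by
    rw [hcg.coeff_succ_succ, div_mul_cancel₀ _ (by positivity)]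
  have hαrAp : α (n + 1) * ⟪r (n + 1), A (p (n + 1))⟫_ℝ = -‖r (n + 1)‖ ^ 2 := by
    rw [← real_inner_smul_right, show α (n + 1) • A (p (n + 1)) = r n - r (n + 1) by
      rw [hcg.residual_succ]; abel, inner_sub_right, h, real_inner_self_eq_norm_sq, zero_sub]
  refine (mul_eq_zero.1 ?_).resolve_left hα
  rw [hcg.direction_succ_succ, map_add, map_smul, inner_add_left, real_inner_smul_left,
    hsymm (r (n + 1))]
  linear_combination β (n + 2) * hαQ + hβ + hαrAp

theorem orthogonality (hcg : IsCGIteration A b x p r α β)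
    (hsymm : ∀ u v : E, ⟪A u, v⟫_ℝ = ⟪u, A v⟫_ℝ) (hpos : ∀ u : E, u ≠ 0 → 0 < ⟪A u, u⟫_ℝ)
    (hnz : ∀ n, r n ≠ 0) (n : ℕ) :
    ⟪r n, p (n + 1)⟫_ℝ = ‖r n‖ ^ 2 ∧ ⟪r (n + 1), r n⟫_ℝ = 0 := by
  induction n with
  | zero =>
    have h : ⟪r 0, p 1⟫_ℝ = ‖r 0‖ ^ 2 := by
      rw [hcg.direction_one, real_inner_self_eq_norm_sq]
    refine ⟨h, ?_⟩
    rw [← hcg.direction_one]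
    exact hcg.inner_residual_succ_direction_of_inner_residual_direction
      (curvature_pos_of_inner_residual_direction hpos (hnz 0) h).ne' h
  | succ n ih =>
    obtain ⟨hr₀p₁, hr₁r₀⟩ := ih
    have hQ := (curvature_pos_of_inner_residual_direction hpos (hnz n) hr₀p₁).ne'
    have hr₁p₁ := hcg.inner_residual_succ_direction_of_inner_residual_direction hQ hr₀p₁
    have hAp₂p₁ := hcg.inner_map_direction_succ_of_inner_residual_succ hsymm hQ (hnz n) hr₁r₀
    have hr₁p₂ : ⟪r (n + 1), p (n + 2)⟫_ℝ = ‖r (n + 1)‖ ^ 2 := by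
      rw [hcg.direction_succ_succ, inner_add_right, real_inner_smul_right, hr₁p₁,
        real_inner_self_eq_norm_sq, mul_zero, zero_add]
    have hQ' := (curvature_pos_of_inner_residual_direction hpos (hnz (n + 1)) hr₁p₂).ne'
    have hr₂p₂ := hcg.inner_residual_succ_direction_of_inner_residual_direction hQ' hr₁p₂
    have hr₂p₁ : ⟪r (n + 2), p (n + 1)⟫_ℝ = 0 := by
      rw [hcg.residual_succ, inner_sub_left, real_inner_smul_left, hr₁p₁, hAp₂p₁, mul_zero,
        sub_zero]
    refine ⟨hr₁p₂, ?_⟩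
    show ⟪r (n + 2), r (n + 1)⟫_ℝ = 0
    rw [show r (n + 1) = p (n + 2) - β (n + 2) • p (n + 1) by
        rw [hcg.direction_succ_succ]; abel,
      inner_sub_right, real_inner_smul_right, hr₂p₂, hr₂p₁, mul_zero, sub_zero]

section Orthogonality

variable (hcg : IsCGIteration A b x p r α β) (hsymm : ∀ u v : E, ⟪A u, v⟫_ℝ = ⟪u, A v⟫_ℝ)
  (hpos : ∀ u : E, u ≠ 0 → 0 < ⟪A u, u⟫_ℝ) (hnz : ∀ n, r n ≠ 0)

include hcg hsymm hpos hnz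

theorem inner_residual_direction (n : ℕ) : ⟪r n, p (n + 1)⟫_ℝ = ‖r n‖ ^ 2 :=
  (hcg.orthogonality hsymm hpos hnz n).1

theorem curvature_pos (n : ℕ) : 0 < ⟪A (p (n + 1)), p (n + 1)⟫_ℝ :=
  curvature_pos_of_inner_residual_direction hpos (hnz n)
    (hcg.inner_residual_direction hsymm hpos hnz n)

theorem step_pos (n : ℕ) : 0 < α (n + 1) := by
  rw [hcg.step_succ]
  exact div_pos (by positivity [hnz n]) (hcg.curvature_pos hsymm hpos hnz n)

theorem step_mul_curvature (n : ℕ) :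
    α (n + 1) * ⟪A (p (n + 1)), p (n + 1)⟫_ℝ = ‖r n‖ ^ 2 :=
  hcg.step_mul_curvature_of_ne_zero (hcg.curvature_pos hsymm hpos hnz n).ne'

theorem inner_residual_succ_direction (n : ℕ) : ⟪r (n + 1), p (n + 1)⟫_ℝ = 0 :=
  hcg.inner_residual_succ_direction_of_inner_residual_direction
    (hcg.curvature_pos hsymm hpos hnz n).ne' (hcg.inner_residual_direction hsymm hpos hnz n)

theorem inner_map_direction_succ (n : ℕ) : ⟪A (p (n + 2)), p (n + 1)⟫_ℝ = 0 :=
  hcg.inner_map_direction_succ_of_inner_residual_succ hsymm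
    (hcg.curvature_pos hsymm hpos hnz n).ne' (hnz n) (hcg.orthogonality hsymm hpos hnz n).2

theorem curvature_le (n : ℕ) : ⟪A (p (n + 1)), p (n + 1)⟫_ℝ ≤ ⟪A (r n), r n⟫_ℝ := by
  cases n with
  | zero => rw [hcg.direction_one]
  | succ n =>
    have hr : r (n + 1) = p (n + 2) + (-β (n + 2)) • p (n + 1) := by
      rw [hcg.direction_succ_succ]; module
    rw [hr]
    exact inner_map_self_le_of_inner_map_eq_zero hsymm
      (hcg.curvature_pos hsymm hpos hnz n).le (hcg.inner_map_direction_succ hsymm hpos hnz n) _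

section Energy

variable {xs : E} (hxs : A xs = b)

include hxs

theorem energyGap_succ (n : ℕ) :
    energyGap A xs (x (n + 1)) = energyGap A xs (x n) - α (n + 1) * ‖r n‖ ^ 2 := by
  have he : x (n + 1) - xs = (x n - xs) + α (n + 1) • p (n + 1) := by
    rw [hcg.iterate_succ]; abel
  have hep : ⟪A (x n - xs), p (n + 1)⟫_ℝ = -‖r n‖ ^ 2 := by
    rw [hcg.map_error hxs, inner_neg_left, hcg.inner_residual_direction hsymm hpos hnz]
  have hpe : ⟪A (p (n + 1)), x n - xs⟫_ℝ = -‖r n‖ ^ 2 := by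
    rw [hsymm, real_inner_comm, hep]
  rw [energyGap, energyGap, he, map_add, map_smul]
  simp only [inner_add_left, inner_add_right, real_inner_smul_left, real_inner_smul_right]
  rw [hep, hpe]
  linear_combination α (n + 1) * hcg.step_mul_curvature hsymm hpos hnz n

theorem energyGap_succ_le {L : ℝ} (hhigh : ∀ u : E, ⟪A u, u⟫_ℝ ≤ L * ‖u‖ ^ 2) (n : ℕ) :
    energyGap A xs (x (n + 1)) ≤ energyGap A xs (x n) - ‖r n‖ ^ 2 / L := by
  have hQ := hcg.curvature_pos hsymm hpos hnz n
  have hR : 0 < ‖r n‖ ^ 2 := by positivity [hnz n]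
  have hQL := (hcg.curvature_le hsymm hpos hnz n).trans (hhigh (r n))
  have hL : 0 < L := pos_of_mul_pos_left (hQ.trans_le hQL) hR.le
  have hstep : ‖r n‖ ^ 2 / L ≤ α (n + 1) * ‖r n‖ ^ 2 := by
    rw [hcg.step_succ, div_mul_eq_mul_div]
    calc ‖r n‖ ^ 2 / L = ‖r n‖ ^ 2 * ‖r n‖ ^ 2 / (L * ‖r n‖ ^ 2) := by field_simp
      _ ≤ ‖r n‖ ^ 2 * ‖r n‖ ^ 2 / ⟪A (p (n + 1)), p (n + 1)⟫_ℝ :=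
        div_le_div_of_nonneg_left (by positivity) hQ hQL
  rw [hcg.energyGap_succ hsymm hpos hnz hxs]
  linarith

theorem shiftedError_succ (n : ℕ) :
    shiftedError A xs x p r (n + 1) = shiftedError A xs x p r n
      + (energyGap A xs (x (n + 1)) / ‖r (n + 1)‖ ^ 2) • r (n + 1) := by
  have hr₀ : ‖r n‖ ≠ 0 := norm_ne_zero_iff.2 (hnz n)
  have hr₁ : ‖r (n + 1)‖ ≠ 0 := norm_ne_zero_iff.2 (hnz (n + 1))
  have hcoeff : α (n + 2) + energyGap A xs (x (n + 2)) / ‖r (n + 1)‖ ^ 2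
      = energyGap A xs (x (n + 1)) / ‖r (n + 1)‖ ^ 2 := by
    rw [hcg.energyGap_succ hsymm hpos hnz hxs (n + 1)]
    field_simp
    ring
  have hβ : energyGap A xs (x (n + 1)) / ‖r (n + 1)‖ ^ 2 * β (n + 2)
      = energyGap A xs (x (n + 1)) / ‖r n‖ ^ 2 := by
    rw [hcg.coeff_succ_succ]
    field_simp
  calc shiftedError A xs x p r (n + 1)
      = (x (n + 1) - xs)
          + (α (n + 2) + energyGap A xs (x (n + 2)) / ‖r (n + 1)‖ ^ 2) • p (n + 2) := by
        rw [shiftedError, hcg.iterate_succ (n + 1)]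
        module
    _ = _ := by
        rw [hcoeff, hcg.direction_succ_succ, shiftedError, ← hβ]
        module

theorem inner_shiftedError_residual (n : ℕ) :
    ⟪shiftedError A xs x p r n, r (n + 1)⟫_ℝ = -energyGap A xs (x (n + 1)) := by
  rw [shiftedError, inner_add_left, real_inner_smul_left, hcg.inner_error_residual hxs,
    real_inner_comm, hcg.inner_residual_succ_direction hsymm hpos hnz, mul_zero, add_zero]

theorem inner_shiftedError_succ_residual (n : ℕ) :
    ⟪shiftedError A xs x p r (n + 1), r (n + 1)⟫_ℝ = 0 := by
  rw [hcg.shiftedError_succ hsymm hpos hnz hxs, inner_add_left, real_inner_smul_left,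
    hcg.inner_shiftedError_residual hsymm hpos hnz hxs, real_inner_self_eq_norm_sq,
    div_mul_cancel₀ _ (by positivity [hnz (n + 1)]), neg_add_cancel]

theorem inner_shiftedError_succ_direction_eq (n : ℕ) :
    ⟪shiftedError A xs x p r (n + 1), p (n + 1)⟫_ℝ
      = ⟪shiftedError A xs x p r n, p (n + 1)⟫_ℝ := by
  rw [hcg.shiftedError_succ hsymm hpos hnz hxs, inner_add_left, real_inner_smul_left,
    hcg.inner_residual_succ_direction hsymm hpos hnz, mul_zero, add_zero]

theorem inner_shiftedError_direction (n : ℕ) :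
    ⟪shiftedError A xs x p r n, p (n + 1)⟫_ℝ = 0 := by
  induction n with
  | zero =>
    have hr₀ : r 0 = r 1 + α 1 • A (p 1) := by rw [hcg.residual_succ]; abel
    have hep : ⟪x 1 - xs, A (p 1)⟫_ℝ = 0 := by
      rw [← hsymm, hcg.map_error hxs, inner_neg_left,
        hcg.inner_residual_succ_direction hsymm hpos hnz 0, neg_zero]
    rw [shiftedError, hcg.direction_one, inner_add_left, real_inner_smul_left,
      real_inner_self_eq_norm_sq, div_mul_cancel₀ _ (by positivity [hnz 0]), hr₀, inner_add_right,
      hcg.inner_error_residual hxs, real_inner_smul_right, hep]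
    ring
  | succ n ih =>
    rw [hcg.direction_succ_succ, inner_add_right, real_inner_smul_right,
      hcg.inner_shiftedError_succ_direction_eq hsymm hpos hnz hxs, ih,
      hcg.inner_shiftedError_succ_residual hsymm hpos hnz hxs, mul_zero, add_zero]

theorem potential_succ_le {ℓ L : ℝ} (hℓ : 0 < ℓ) (hℓL : ℓ ≤ L)
    (hlow : ∀ u : E, ℓ * ‖u‖ ^ 2 ≤ ⟪A u, u⟫_ℝ) (hhigh : ∀ u : E, ⟪A u, u⟫_ℝ ≤ L * ‖u‖ ^ 2)
    (n : ℕ) :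
    (1 + √(ℓ / L)) * (‖shiftedError A xs x p r (n + 1)‖ ^ 2 + energyGap A xs (x (n + 2)) / ℓ)
      ≤ ‖shiftedError A xs x p r n‖ ^ 2 + energyGap A xs (x (n + 1)) / ℓ := by
  set c := √(ℓ / L)
  have hL : 0 < L := hℓ.trans_le hℓL
  have hc0 : 0 ≤ c := Real.sqrt_nonneg _
  have hc1 : c ≤ 1 := Real.sqrt_le_one.2 ((div_le_one hL).2 hℓL)
  have hc2 : c ^ 2 * (‖r (n + 1)‖ ^ 2 / ℓ ^ 2) = ‖r (n + 1)‖ ^ 2 / L / ℓ := by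
    rw [Real.sq_sqrt (by positivity)]
    field_simp
  have hF : 0 ≤ energyGap A xs (x (n + 1)) :=
    (mul_nonneg hℓ.le (sq_nonneg _)).trans (hlow _)
  have hw := norm_sq_le_of_orthogonal_update (w := shiftedError A xs x p r n) hℓ hc0 hc1 rfl
    (hcg.shiftedError_succ hsymm hpos hnz hxs n)
    (by rw [real_inner_comm]; exact hcg.inner_residual_succ_direction hsymm hpos hnz n)
    (hcg.inner_error_residual hxs (n + 1)) (hlow _)
    ((hcg.inner_shiftedError_succ_direction_eq hsymm hpos hnz hxs n).trans
      (hcg.inner_shiftedError_direction hsymm hpos hnz hxs n))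
    (hcg.inner_shiftedError_succ_residual hsymm hpos hnz hxs n)
  have hE : energyGap A xs (x (n + 2)) / ℓ
      ≤ energyGap A xs (x (n + 1)) / ℓ - ‖r (n + 1)‖ ^ 2 / L / ℓ := by
    rw [← sub_div]
    exact div_le_div_of_nonneg_right
      (hcg.energyGap_succ_le hsymm hpos hnz hxs hhigh (n + 1)) hℓ.le
  have hcontract : ‖shiftedError A xs x p r (n + 1)‖ ^ 2 + energyGap A xs (x (n + 2)) / ℓ
      ≤ (1 - c) * (‖shiftedError A xs x p r n‖ ^ 2 + energyGap A xs (x (n + 1)) / ℓ) := by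
    linarith
  have hΨ : 0 ≤ ‖shiftedError A xs x p r n‖ ^ 2 + energyGap A xs (x (n + 1)) / ℓ := by positivity
  have := mul_le_mul_of_nonneg_left hcontract (by positivity : 0 ≤ 1 + c)
  linarith [mul_nonneg (sq_nonneg c) hΨ]

end Energy

end Orthogonality

end IsCGIteration

end ConjugateGradient

theorem stmt10
    {E : Type*} [NormedAddCommGroup E] [InnerProductSpace ℝ E]
    (A : E →L[ℝ] E) (b : E)
    (hsymm : ∀ u v : E, ⟪A u, v⟫_ℝ = ⟪u, A v⟫_ℝ)
    (hpos : ∀ u : E, u ≠ 0 → 0 < ⟪A u, u⟫_ℝ)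
    (f : E → ℝ) (hf : ∀ z : E, f z = ⟪z, A z⟫_ℝ / 2 - ⟪b, z⟫_ℝ)
    (x p r : ℕ → E) (α β : ℕ → ℝ)
    (hr0 : r 0 = b - A (x 0))
    (hp1 : p 1 = r 0)
    (hβ : ∀ k ≥ 1, β (k + 1) = ‖r k‖ ^ 2 / ‖r (k - 1)‖ ^ 2)
    (hp : ∀ k ≥ 1, p (k + 1) = β (k + 1) • p k + r k)
    (hα : ∀ k, α (k + 1) = ‖r k‖ ^ 2 / ⟪A (p (k + 1)), p (k + 1)⟫_ℝ)
    (hx : ∀ k, x (k + 1) = x k + α (k + 1) • p (k + 1))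
    (hrr : ∀ k, r (k + 1) = r k - α (k + 1) • A (p (k + 1)))
    (hnz : ∀ k, r k ≠ 0)
    (xs : E) (hxs : A xs = b)
    (F : ℕ → ℝ) (hF : ∀ k, F k = 2 * (f (x k) - f xs))
    (s : ℕ → E) (hs : ∀ k ≥ 1, s k = α k • p k)
    (ρ : ℕ → ℝ) (hρ : ∀ k ≥ 1, ρ k = F k / (α k * ‖r (k - 1)‖ ^ 2))
    (w : ℕ → E) (hw : ∀ k ≥ 1, w k = x k + ρ k • s k - xs)
    (ℓ L : ℝ) (hℓ : 0 < ℓ) (hℓL : ℓ ≤ L)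
    (hlow : ∀ u : E, ℓ * ‖u‖ ^ 2 ≤ ⟪A u, u⟫_ℝ)
    (hhigh : ∀ u : E, ⟪A u, u⟫_ℝ ≤ L * ‖u‖ ^ 2)
    (Ψ : ℕ → ℝ) (hΨ : ∀ k ≥ 1, Ψ k = ‖w k‖ ^ 2 + F k / ℓ) :
    ∀ k ≥ 1, (1 + Real.sqrt (ℓ / L)) * Ψ (k + 1) ≤ Ψ k := by
  have hcg : IsCGIteration A b x p r α β :=
    ⟨hr0, hp1, fun n => by simpa using hβ (n + 1) (Nat.le_add_left 1 n),
      fun n => hp (n + 1) (Nat.le_add_left 1 n),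
      hα, hx, hrr⟩
  obtain rfl : F = fun k => energyGap A xs (x k) :=
    funext fun k => (hF k).trans (two_mul_sub_eq_energyGap hsymm hxs hf (x k))
  have hw' (n : ℕ) : w (n + 1) = shiftedError A xs x p r n := by
    have hα₀ := (hcg.step_pos hsymm hpos hnz n).ne'
    have hn : 1 ≤ n + 1 := Nat.le_add_left 1 n
    rw [hw _ hn, hs _ hn, hρ _ hn, smul_smul, shiftedError, Nat.add_sub_cancel,
      div_mul_eq_mul_div, mul_comm (α (n + 1)) (‖r n‖ ^ 2), mul_div_mul_right _ _ hα₀]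
    abel
  intro k hk
  obtain ⟨n, rfl⟩ := Nat.exists_eq_add_of_le' hk
  rw [hΨ _ (by omega), hΨ _ hk, hw', hw']
  exact hcg.potential_succ_le hsymm hpos hnz hxs hℓ hℓL hlow hhigh n
end

section
/- For the CG iteration, the potential Ψ_k = ‖w_k‖² + F_k/ℓ satisfies Ψ_1 ≤ Ψ_0, where w_0 = x_0 − x* and Ψ_0 = ‖x_0 − x*‖² + F_0/ℓ. -/
open scoped InnerProductSpace

theorem stmt11
    {E : Type*} [NormedAddCommGroup E] [InnerProductSpace ℝ E]
    (A : E →L[ℝ] E) (b : E)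
    (hsymm : ∀ u v : E, ⟪A u, v⟫_ℝ = ⟪u, A v⟫_ℝ)
    (hpos : ∀ u : E, u ≠ 0 → 0 < ⟪A u, u⟫_ℝ)
    (f : E → ℝ) (hf : ∀ z : E, f z = ⟪z, A z⟫_ℝ / 2 - ⟪b, z⟫_ℝ)
    (x p r : ℕ → E) (α β : ℕ → ℝ)
    (hr0 : r 0 = b - A (x 0))
    (hp1 : p 1 = r 0)
    (hβ : ∀ k ≥ 1, β (k + 1) = ‖r k‖ ^ 2 / ‖r (k - 1)‖ ^ 2)
    (hp : ∀ k ≥ 1, p (k + 1) = β (k + 1) • p k + r k)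
    (hα : ∀ k, α (k + 1) = ‖r k‖ ^ 2 / ⟪A (p (k + 1)), p (k + 1)⟫_ℝ)
    (hx : ∀ k, x (k + 1) = x k + α (k + 1) • p (k + 1))
    (hrr : ∀ k, r (k + 1) = r k - α (k + 1) • A (p (k + 1)))
    (hnz : r 0 ≠ 0)
    (xs : E) (hxs : A xs = b)
    (F : ℕ → ℝ) (hF : ∀ k, F k = 2 * (f (x k) - f xs))
    (s : ℕ → E) (hs : ∀ k ≥ 1, s k = α k • p k)
    (ρ : ℕ → ℝ) (hρ : ∀ k ≥ 1, ρ k = F k / (α k * ‖r (k - 1)‖ ^ 2))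
    (w : ℕ → E) (hw0 : w 0 = x 0 - xs) (hw : ∀ k ≥ 1, w k = x k + ρ k • s k - xs)
    (ℓ : ℝ) (hℓ : 0 < ℓ)
    (hlow : ∀ u : E, ℓ * ‖u‖ ^ 2 ≤ ⟪A u, u⟫_ℝ)
    (Ψ : ℕ → ℝ) (hΨ : ∀ k, Ψ k = ‖w k‖ ^ 2 + F k / ℓ) :
    Ψ 1 ≤ Ψ 0 := by
  have hRpos : (0:ℝ) < ‖r 0‖ ^ 2 := by
    have := norm_pos_iff.mpr hnz
    positivity
  set R := ‖r 0‖ ^ 2 with hR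
  have hq : 0 < ⟪A (r 0), r 0⟫_ℝ := hpos _ hnz
  have hα1 : α 1 = R / ⟪A (r 0), r 0⟫_ℝ := by
    have := hα 0; simpa [hp1] using this
  have ha : 0 < α 1 := by rw [hα1]; positivity
  set e0 := x 0 - xs with he0
  have hAe : A e0 = -(r 0) := by
    rw [he0, map_sub, hxs, hr0]; abel
  have hFz : ∀ z, 2 * (f z - f xs) = ⟪z - xs, A (z - xs)⟫_ℝ := by
    intro z
    have h2 : ⟪xs, A z⟫_ℝ = ⟪b, z⟫_ℝ := by rw [← hsymm, hxs]
    have h3 : ⟪z, b⟫_ℝ = ⟪b, z⟫_ℝ := real_inner_comm _ _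
    have h4 : ⟪xs, b⟫_ℝ = ⟪b, xs⟫_ℝ := real_inner_comm _ _
    simp only [hf, map_sub, inner_sub_left, inner_sub_right, hxs, h2, h3, h4]
    ring
  have hF0 : F 0 = ⟪e0, A e0⟫_ℝ := by rw [hF 0, hFz]
  have h_er : ⟪e0, r 0⟫_ℝ = -F 0 := by
    rw [hF0, hAe, inner_neg_right]; ring
  have h_eAr : ⟪e0, A (r 0)⟫_ℝ = -R := by
    rw [← hsymm, hAe, inner_neg_left, real_inner_self_eq_norm_sq]
  have h_rAe : ⟪r 0, A e0⟫_ℝ = -R := by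
    rw [hAe, inner_neg_right, real_inner_self_eq_norm_sq]
  have haq : α 1 * ⟪A (r 0), r 0⟫_ℝ = R := by
    rw [hα1]; field_simp
  have hAr_sym : ⟪r 0, A (r 0)⟫_ℝ = ⟪A (r 0), r 0⟫_ℝ := (hsymm _ _).symm
  have hx1 : x 1 - xs = e0 + α 1 • r 0 := by
    rw [hx 0, hp1, he0]; abel
  have hF1 : F 1 = F 0 - α 1 * R := by
    rw [hF 1, hFz, hx1]
    simp only [map_add, map_smul, inner_add_left, inner_add_right,
      real_inner_smul_left, real_inner_smul_right, h_eAr, h_rAe, hAr_sym,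
      ContinuousLinearMap.map_smul]
    rw [← hF0]
    nlinarith [haq]
  have hρ1 : ρ 1 = F 1 / (α 1 * R) := by
    have := hρ 1 le_rfl; simpa using this
  set c : ℝ := α 1 + ρ 1 * α 1 with hcdef
  have hc : c = F 0 / R := by
    rw [hcdef, hρ1, hF1]
    field_simp
    ring
  have hw1 : w 1 = e0 + c • r 0 := by
    rw [hw 1 le_rfl, hs 1 le_rfl, hp1, hx 0, hp1, he0, smul_smul, hcdef, add_smul]
    abel
  have hnw : ‖w 1‖ ^ 2 = ‖e0‖ ^ 2 + 2 * (c * (-F 0)) + c ^ 2 * R := by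
    rw [hw1, norm_add_sq_real, real_inner_smul_right, h_er, norm_smul, mul_pow,
      Real.norm_eq_abs, sq_abs, hR]
  have hgoal : Ψ 0 - Ψ 1 = F 0 ^ 2 / R + α 1 * R / ℓ := by
    rw [hΨ 0, hΨ 1, hw0, hnw, hF1, hc]
    field_simp
    ring
  have h1 : 0 ≤ F 0 ^ 2 / R := div_nonneg (sq_nonneg _) hRpos.le
  have h2 : 0 ≤ α 1 * R / ℓ := div_nonneg (mul_nonneg ha.le hRpos.le) hℓ.le
  linarith [hgoal]
end

section
/- Conjugate gradient applied to f(x) = x^T A x/2 − b^T x with A symmetric positive definite having eigenvalues in [ℓ, L] satisfies f(x_k) − f(x*) ≤ C_0 (1 + √(ℓ/L))^{−(k−1)} for all k ≥ 1, where C_0 = (ℓ/2)‖x_0 − x*‖² + f(x_0) − f(x*). -/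
/-!
Both methods live in the Krylov spaces `𝒦ₜ = span {r₀, A r₀, …, Aᵗ⁻¹ r₀}`. Conjugate gradients
keeps its residuals pairwise orthogonal and its directions `A`-conjugate, so `r₀, …, r_{k-1}` span
a space that contains `𝒦ₖ` and `x_k - x₀` and is orthogonal to `r_k = -A (x_k - x*)`: hence `x_k`
minimises `f` over `x₀ + 𝒦ₖ`. Nesterov's accelerated gradient method with momentum
`q = √(ℓ/L)`, started at `x₀`, stays in `x₀ + 𝒦ₜ` after `t` steps, and its potential
`f y - f x* + ℓ/2 ‖v - x*‖²` contracts by `1 - q ≤ (1 + q)⁻¹` per step. Comparing `x_k` with the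
`(k-1)`-st accelerated iterate gives the bound, the initial potential being `C₀`.
-/

open scoped InnerProductSpace

section

variable {E : Type*} [NormedAddCommGroup E] [InnerProductSpace ℝ E] {A : E →L[ℝ] E}

theorem inner_apply_comm (hA : ∀ u v : E, ⟪A u, v⟫_ℝ = ⟪u, A v⟫_ℝ) (u v : E) :
    ⟪A u, v⟫_ℝ = ⟪A v, u⟫_ℝ := by
  rw [hA, real_inner_comm]

theorem inner_apply_add_add (hA : ∀ u v : E, ⟪A u, v⟫_ℝ = ⟪u, A v⟫_ℝ) (a u : E) :
    ⟪A (a + u), a + u⟫_ℝ = ⟪A a, a⟫_ℝ + 2 * ⟪A a, u⟫_ℝ + ⟪A u, u⟫_ℝ := by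
  rw [map_add, inner_add_left, inner_add_right, inner_add_right, inner_apply_comm hA u a]
  ring

theorem inner_apply_sub_smul_apply (hA : ∀ u v : E, ⟪A u, v⟫_ℝ = ⟪u, A v⟫_ℝ) (c : ℝ) (a : E) :
    ⟪A (a - c • A a), a - c • A a⟫_ℝ
      = ⟪A a, a⟫_ℝ - 2 * c * ‖A a‖ ^ 2 + c ^ 2 * ⟪A (A a), A a⟫_ℝ := by
  rw [map_sub, map_smul, inner_sub_left, inner_sub_right, inner_sub_right, real_inner_smul_left,
    real_inner_smul_left, real_inner_smul_right, real_inner_smul_right,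
    inner_apply_comm hA (A a) a, real_inner_self_eq_norm_sq]
  ring

theorem norm_sub_smul_sub_smul_sq (c d : ℝ) (a u g : E) :
    ‖a - c • u - d • g‖ ^ 2 = ‖a‖ ^ 2 + c ^ 2 * ‖u‖ ^ 2 + d ^ 2 * ‖g‖ ^ 2
      - 2 * c * ⟪a, u⟫_ℝ - 2 * d * ⟪a, g⟫_ℝ + 2 * c * d * ⟪u, g⟫_ℝ := by
  rw [norm_sub_sq_real, norm_sub_sq_real, inner_sub_left, norm_smul, norm_smul, mul_pow, mul_pow,
    Real.norm_eq_abs, Real.norm_eq_abs, sq_abs, sq_abs, real_inner_smul_right,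
    real_inner_smul_right, real_inner_smul_left, real_inner_smul_right]
  ring

theorem inner_apply_self_le_inner_apply_add (hA : ∀ u v : E, ⟪A u, v⟫_ℝ = ⟪u, A v⟫_ℝ) {e d : E}
    (hd : 0 ≤ ⟪A d, d⟫_ℝ) (he : ⟪A e, d⟫_ℝ = 0) : ⟪A e, e⟫_ℝ ≤ ⟪A (e + d), e + d⟫_ℝ := by
  rw [inner_apply_add_add hA, he]
  linarith

theorem sub_eq_half_inner_apply_sub (hA : ∀ u v : E, ⟪A u, v⟫_ℝ = ⟪u, A v⟫_ℝ) {f : E → ℝ}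
    {b : E} (hf : ∀ z : E, f z = ⟪z, A z⟫_ℝ / 2 - ⟪b, z⟫_ℝ) {xs : E} (hxs : A xs = b) (z : E) :
    f z - f xs = ⟪A (z - xs), z - xs⟫_ℝ / 2 := by
  rw [hf, hf, ← hxs, map_sub, inner_sub_left, inner_sub_right, inner_sub_right,
    inner_apply_comm hA z xs, real_inner_comm (A z) z, real_inner_comm (A xs) xs]
  ring

def prefixSpan (r : ℕ → E) (t : ℕ) : Submodule ℝ E :=
  Submodule.span ℝ (r '' Set.Iio t)

theorem mem_prefixSpan {r : ℕ → E} {i t : ℕ} (h : i < t) : r i ∈ prefixSpan r t :=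
  Submodule.subset_span ⟨i, h, rfl⟩

theorem prefixSpan_mono (r : ℕ → E) : Monotone (prefixSpan r) :=
  fun _ _ hst => Submodule.span_mono (Set.image_mono (Set.Iio_subset_Iio hst))

def krylov (A : E →L[ℝ] E) (r : E) : ℕ → Submodule ℝ E :=
  prefixSpan fun i => (A ^ i) r

theorem krylov_mono (A : E →L[ℝ] E) (r : E) : Monotone (krylov A r) :=
  prefixSpan_mono _

theorem self_mem_krylov (A : E →L[ℝ] E) (r : E) (t : ℕ) : r ∈ krylov A r (t + 1) :=
  mem_prefixSpan (r := fun i => (A ^ i) r) t.succ_pos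

theorem apply_mem_krylov_succ {r z : E} {t : ℕ} (hz : z ∈ krylov A r t) :
    A z ∈ krylov A r (t + 1) := by
  induction hz using Submodule.span_induction with
  | mem _ hw =>
    obtain ⟨i, hi, rfl⟩ := hw
    have := mem_prefixSpan (r := fun i => (A ^ i) r) (Nat.succ_lt_succ hi)
    rw [pow_succ'] at this
    exact this
  | zero => simp
  | add _ _ _ _ h₁ h₂ => simpa using add_mem h₁ h₂
  | smul c _ _ h => simpa using Submodule.smul_mem _ c h

theorem krylov_le_of_apply_mem {r : E} {S : ℕ → Submodule ℝ E} (hS : Monotone S)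
    (hr : r ∈ S 1) {N : ℕ} (hmap : ∀ t < N, ∀ z ∈ S t, A z ∈ S (t + 1)) :
    krylov A r N ≤ S N := by
  have hpow : ∀ i < N, (A ^ i) r ∈ S (i + 1) := by
    intro i
    induction i with
    | zero => intro _; simpa using hr
    | succ i ih =>
      intro hi
      rw [pow_succ']
      exact hmap (i + 1) hi _ (ih (by omega))
  exact Submodule.span_le.2 fun _ ⟨i, hi, hz⟩ => hz ▸ hS hi (hpow i hi)

/-- One step of Nesterov's method on the pair `(y, v)`: `w` is the extrapolated point and
`A w - b` the gradient of `f` at `w`. -/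
noncomputable def agdStep (A : E →L[ℝ] E) (b : E) (ℓ L : ℝ) (yv : E × E) : E × E :=
  let q := Real.sqrt (ℓ / L)
  let w := (1 + q)⁻¹ • (yv.1 + q • yv.2)
  (w - L⁻¹ • (A w - b), (1 - q) • yv.2 + q • w - (q / ℓ) • (A w - b))

noncomputable def agdPotential (A : E →L[ℝ] E) (xs : E) (ℓ : ℝ) (yv : E × E) : ℝ :=
  ⟪A (yv.1 - xs), yv.1 - xs⟫_ℝ / 2 + ℓ / 2 * ‖yv.2 - xs‖ ^ 2

theorem agdPotential_nonneg {ℓ : ℝ} (hℓ : 0 < ℓ)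
    (hlow : ∀ u : E, ℓ * ‖u‖ ^ 2 ≤ ⟪A u, u⟫_ℝ) (xs : E) (yv : E × E) :
    0 ≤ agdPotential A xs ℓ yv := by
  have := (mul_nonneg hℓ.le (sq_nonneg ‖yv.1 - xs‖)).trans (hlow (yv.1 - xs))
  unfold agdPotential
  positivity

theorem sqrt_div_pos_le_one {ℓ L : ℝ} (hℓ : 0 < ℓ) (hℓL : ℓ ≤ L) :
    0 < Real.sqrt (ℓ / L) ∧ Real.sqrt (ℓ / L) ≤ 1 ∧ Real.sqrt (ℓ / L) ^ 2 * L = ℓ := by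
  have hL : 0 < L := hℓ.trans_le hℓL
  refine ⟨Real.sqrt_pos.2 (div_pos hℓ hL), Real.sqrt_le_one.2 ((div_le_one hL).2 hℓL), ?_⟩
  rw [Real.sq_sqrt (div_pos hℓ hL).le, div_mul_cancel₀ _ hL.ne']

/-- The contraction of `agdPotential` in the coordinates `a = w - x*`, `u = y - w` of one step. -/
theorem agd_lyapunov_ineq (hA : ∀ u v : E, ⟪A u, v⟫_ℝ = ⟪u, A v⟫_ℝ)
    {ℓ L q : ℝ} (hq0 : 0 < q) (hq1 : q ≤ 1) (hL : 0 < L) (hqL : q ^ 2 * L = ℓ)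
    (hlow : ∀ u : E, ℓ * ‖u‖ ^ 2 ≤ ⟪A u, u⟫_ℝ) (hhigh : ∀ u : E, ⟪A u, u⟫_ℝ ≤ L * ‖u‖ ^ 2)
    (a u : E) :
    ⟪A (a - L⁻¹ • A a), a - L⁻¹ • A a⟫_ℝ / 2
        + ℓ / 2 * ‖a - ((1 - q) / q) • u - (q / ℓ) • A a‖ ^ 2
      ≤ (1 - q) * (⟪A (a + u), a + u⟫_ℝ / 2 + ℓ / 2 * ‖a - q⁻¹ • u‖ ^ 2) := by
  subst hqL
  rw [inner_apply_sub_smul_apply hA, norm_sub_smul_sub_smul_sq, inner_apply_add_add hA,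
    norm_sub_sq_real a, norm_smul, real_inner_smul_right, real_inner_comm (A a) a,
    real_inner_comm (A a) u, Real.norm_eq_abs, mul_pow, sq_abs]
  have hdescent : 0 ≤ L * ‖A a‖ ^ 2 - ⟪A (A a), A a⟫_ℝ := by linarith [hhigh (A a)]
  have hu : 0 ≤ ⟪A u, u⟫_ℝ - q ^ 2 * L * ‖u‖ ^ 2 := by linarith [hlow u]
  have ha : 0 ≤ ⟪A a, a⟫_ℝ - q ^ 2 * L * ‖a‖ ^ 2 := by linarith [hlow a]
  have hq : 0 ≤ 1 - q := by linarith
  rw [← sub_nonneg]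
  convert (show 0 ≤ (L * ‖A a‖ ^ 2 - ⟪A (A a), A a⟫_ℝ) / (2 * L ^ 2)
      + (1 - q) / 2 * (⟪A u, u⟫_ℝ - q ^ 2 * L * ‖u‖ ^ 2)
      + q / 2 * (⟪A a, a⟫_ℝ - q ^ 2 * L * ‖a‖ ^ 2)
      + q * L * (1 - q) * (1 + q) / 2 * ‖u‖ ^ 2 by positivity) using 1
  field_simp
  ring

theorem agdPotential_agdStep_le (hA : ∀ u v : E, ⟪A u, v⟫_ℝ = ⟪u, A v⟫_ℝ)
    {b xs : E} (hxs : A xs = b) {ℓ L : ℝ} (hℓ : 0 < ℓ) (hℓL : ℓ ≤ L)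
    (hlow : ∀ u : E, ℓ * ‖u‖ ^ 2 ≤ ⟪A u, u⟫_ℝ) (hhigh : ∀ u : E, ⟪A u, u⟫_ℝ ≤ L * ‖u‖ ^ 2)
    (yv : E × E) :
    agdPotential A xs ℓ (agdStep A b ℓ L yv)
      ≤ (1 - Real.sqrt (ℓ / L)) * agdPotential A xs ℓ yv := by
  obtain ⟨y, v⟩ := yv
  obtain ⟨hq0, hq1, hqL⟩ := sqrt_div_pos_le_one hℓ hℓL
  simp only [agdStep, agdPotential]
  set q := Real.sqrt (ℓ / L)
  set w := (1 + q)⁻¹ • (y + q • v) with hw_def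
  have hw : (1 + q) • w = y + q • v := by
    rw [hw_def, smul_smul, mul_inv_cancel₀ (by positivity), one_smul]
  clear_value q w
  have hqv : q • (v - xs) = q • (w - xs) - (y - w) := by
    linear_combination (norm := module) -hw
  have hv : v - xs = (w - xs) - q⁻¹ • (y - w) := by
    rw [← inv_smul_smul₀ hq0.ne' (v - xs), hqv, smul_sub, inv_smul_smul₀ hq0.ne']
  rw [show A w - b = A (w - xs) by rw [map_sub, hxs],
    show w - L⁻¹ • A (w - xs) - xs = (w - xs) - L⁻¹ • A (w - xs) by abel,
    show (1 - q) • v + q • w - (q / ℓ) • A (w - xs) - xs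
      = (w - xs) - ((1 - q) / q) • (y - w) - (q / ℓ) • A (w - xs) by
      linear_combination (norm := module) (1 - q) • hv,
    show y - xs = (w - xs) + (y - w) by abel, hv]
  exact agd_lyapunov_ineq hA hq0 hq1 (hℓ.trans_le hℓL) hqL hlow hhigh _ _

theorem agdPotential_iterate_le (hA : ∀ u v : E, ⟪A u, v⟫_ℝ = ⟪u, A v⟫_ℝ)
    {b xs : E} (hxs : A xs = b) {ℓ L : ℝ} (hℓ : 0 < ℓ) (hℓL : ℓ ≤ L)
    (hlow : ∀ u : E, ℓ * ‖u‖ ^ 2 ≤ ⟪A u, u⟫_ℝ) (hhigh : ∀ u : E, ⟪A u, u⟫_ℝ ≤ L * ‖u‖ ^ 2)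
    (yv : E × E) (t : ℕ) :
    agdPotential A xs ℓ ((agdStep A b ℓ L)^[t] yv)
      ≤ (1 - Real.sqrt (ℓ / L)) ^ t * agdPotential A xs ℓ yv := by
  have hq1 := (sqrt_div_pos_le_one hℓ hℓL).2.1
  induction t with
  | zero => simp
  | succ t ih =>
    rw [Function.iterate_succ_apply', pow_succ', mul_assoc]
    exact (agdPotential_agdStep_le hA hxs hℓ hℓL hlow hhigh _).trans
      (mul_le_mul_of_nonneg_left ih (by linarith))

theorem agdStep_iterate_sub_mem_krylov (A : E →L[ℝ] E) (b x₀ : E) (ℓ L : ℝ) (t : ℕ) :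
    ((agdStep A b ℓ L)^[t] (x₀, x₀)).1 - x₀ ∈ krylov A (b - A x₀) t
      ∧ ((agdStep A b ℓ L)^[t] (x₀, x₀)).2 - x₀ ∈ krylov A (b - A x₀) t := by
  induction t with
  | zero => simp
  | succ t ih =>
    obtain ⟨hy, hv⟩ := ih
    rw [Function.iterate_succ_apply']
    set yv := (agdStep A b ℓ L)^[t] (x₀, x₀)
    simp only [agdStep]
    set q := Real.sqrt (ℓ / L)
    have hq : 0 ≤ q := Real.sqrt_nonneg _
    set w := (1 + q)⁻¹ • (yv.1 + q • yv.2) with hw_def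
    set K := krylov A (b - A x₀)
    have hw : w - x₀ ∈ K t := by
      have : w - x₀ = (1 + q)⁻¹ • ((yv.1 - x₀) + q • (yv.2 - x₀)) := by
        conv_lhs => rw [hw_def, ← inv_smul_smul₀ (by positivity : 1 + q ≠ 0) x₀]
        module
      rw [this]
      exact Submodule.smul_mem _ _ (add_mem hy (Submodule.smul_mem _ _ hv))
    have hg : A w - b ∈ K (t + 1) := by
      rw [show A w - b = A (w - x₀) - (b - A x₀) by rw [map_sub]; abel]
      exact sub_mem (apply_mem_krylov_succ hw) (self_mem_krylov _ _ _)
    have hmono := krylov_mono A (b - A x₀) t.le_succ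
    constructor
    · rw [show w - L⁻¹ • (A w - b) - x₀ = (w - x₀) - L⁻¹ • (A w - b) by abel]
      exact sub_mem (hmono hw) (Submodule.smul_mem _ _ hg)
    · rw [show (1 - q) • yv.2 + q • w - (q / ℓ) • (A w - b) - x₀
          = (1 - q) • (yv.2 - x₀) + q • (w - x₀) - (q / ℓ) • (A w - b) by module]
      exact sub_mem (add_mem (Submodule.smul_mem _ _ (hmono hv))
        (Submodule.smul_mem _ _ (hmono hw))) (Submodule.smul_mem _ _ hg)

/-- Directions are indexed from `1`: `p 0` and `β 1` play no role. -/
structure IsCGSequence (A : E →L[ℝ] E) (b : E) (x p r : ℕ → E) (α β : ℕ → ℝ) : Prop where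
  residual_zero : r 0 = b - A (x 0)
  direction_one : p 1 = r 0
  beta_succ : ∀ k ≥ 1, β (k + 1) = ‖r k‖ ^ 2 / ‖r (k - 1)‖ ^ 2
  direction_succ : ∀ k ≥ 1, p (k + 1) = β (k + 1) • p k + r k
  alpha_succ : ∀ k, α (k + 1) = ‖r k‖ ^ 2 / ⟪A (p (k + 1)), p (k + 1)⟫_ℝ
  iterate_succ : ∀ k, x (k + 1) = x k + α (k + 1) • p (k + 1)
  residual_succ : ∀ k, r (k + 1) = r k - α (k + 1) • A (p (k + 1))

structure CGOrthogonalAt (A : E →L[ℝ] E) (p r : ℕ → E) (n : ℕ) : Prop where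
  residual : ∀ i < n, ⟪r i, r n⟫_ℝ = 0
  conjugate : ∀ i, 1 ≤ i → i < n → ⟪A (p i), p n⟫_ℝ = 0
  residual_direction : ∀ i, 1 ≤ i → i ≤ n → ⟪r n, p i⟫_ℝ = 0

theorem CGOrthogonalAt.inner_eq_zero_of_mem {p r : ℕ → E} {n : ℕ}
    (hn : CGOrthogonalAt A p r n) {z : E} (hz : z ∈ prefixSpan r n) : ⟪r n, z⟫_ℝ = 0 := by
  have : prefixSpan r n ≤ (ℝ ∙ r n)ᗮ := Submodule.span_le.2 <| by
    rintro _ ⟨i, hi, rfl⟩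
    rw [SetLike.mem_coe, Submodule.mem_orthogonal_singleton_iff_inner_right, real_inner_comm]
    exact hn.residual i hi
  exact Submodule.mem_orthogonal_singleton_iff_inner_right.1 (this hz)

namespace IsCGSequence

variable {b : E} {x p r : ℕ → E} {α β : ℕ → ℝ}

theorem residual_eq (h : IsCGSequence A b x p r α β) (k : ℕ) : r k = b - A (x k) := by
  induction k with
  | zero => exact h.residual_zero
  | succ k ih => rw [h.residual_succ, ih, h.iterate_succ, map_add, map_smul]; abel

theorem inner_direction_succ (h : IsCGSequence A b x p r α β) {v : E} {i : ℕ}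
    (hv : 1 ≤ i → ⟪v, p i⟫_ℝ = 0) : ⟪v, p (i + 1)⟫_ℝ = ⟪v, r i⟫_ℝ := by
  rcases Nat.eq_zero_or_pos i with rfl | hi
  · rw [h.direction_one]
  · rw [h.direction_succ i hi, inner_add_right, real_inner_smul_right, hv hi, mul_zero, zero_add]

theorem alpha_ne_zero_and_mul_inner_apply (h : IsCGSequence A b x p r α β)
    (hpos : ∀ u : E, u ≠ 0 → 0 < ⟪A u, u⟫_ℝ) {j : ℕ} (hr : r j ≠ 0)
    (hj : CGOrthogonalAt A p r j) :
    α (j + 1) ≠ 0 ∧ α (j + 1) * ⟪A (p (j + 1)), p (j + 1)⟫_ℝ = ‖r j‖ ^ 2 := by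
  have hrp : ⟪r j, p (j + 1)⟫_ℝ = ‖r j‖ ^ 2 := by
    rw [h.inner_direction_succ fun hj1 => hj.residual_direction j hj1 le_rfl,
      real_inner_self_eq_norm_sq]
  have hrn : ‖r j‖ ^ 2 ≠ 0 := by positivity
  have hcurv : 0 < ⟪A (p (j + 1)), p (j + 1)⟫_ℝ :=
    hpos _ fun hp0 => hrn (by rw [← hrp, hp0, inner_zero_right])
  rw [h.alpha_succ]
  exact ⟨div_ne_zero hrn hcurv.ne', div_mul_cancel₀ _ hcurv.ne'⟩

theorem apply_direction (h : IsCGSequence A b x p r α β) {j : ℕ} (hα : α (j + 1) ≠ 0) :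
    A (p (j + 1)) = (α (j + 1))⁻¹ • (r j - r (j + 1)) := by
  rw [h.residual_succ, sub_sub_cancel, inv_smul_smul₀ hα]

theorem inner_apply_direction_succ_eq_zero (h : IsCGSequence A b x p r α β)
    (hpos : ∀ u : E, u ≠ 0 → 0 < ⟪A u, u⟫_ℝ) {n : ℕ}
    (hprev : ∀ m ≤ n, CGOrthogonalAt A p r m) (hnz : ∀ j ≤ n, r j ≠ 0) {i : ℕ}
    (hi : 1 ≤ i) (hin : i < n + 1) : ⟪A (p i), p (n + 1)⟫_ℝ = 0 := by
  obtain ⟨j, rfl⟩ : ∃ j, i = j + 1 := ⟨i - 1, by omega⟩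
  obtain ⟨hα, hαc⟩ := h.alpha_ne_zero_and_mul_inner_apply hpos (hnz j (by omega)) (hprev j (by omega))
  have hn := hprev n le_rfl
  have hAr : ⟪A (p (j + 1)), r n⟫_ℝ = (α (j + 1))⁻¹ * (0 - ⟪r (j + 1), r n⟫_ℝ) := by
    rw [h.apply_direction hα, real_inner_smul_left, inner_sub_left, hn.residual j (by omega)]
  rw [h.direction_succ n (by omega), inner_add_right, real_inner_smul_right, hAr]
  rcases (Nat.lt_succ_iff.1 hin).lt_or_eq with hlt | rfl
  · rw [hn.residual (j + 1) hlt, hn.conjugate (j + 1) hi hlt]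
    ring
  · rw [h.beta_succ (j + 1) hi, Nat.add_sub_cancel, real_inner_self_eq_norm_sq]
    have hrj : ‖r j‖ ≠ 0 := norm_ne_zero_iff.2 (hnz j (by omega))
    field_simp
    linear_combination ‖r (j + 1)‖ ^ 2 * hαc

theorem inner_residual_succ_direction_eq_zero (h : IsCGSequence A b x p r α β)
    (hA : ∀ u v : E, ⟪A u, v⟫_ℝ = ⟪u, A v⟫_ℝ) (hpos : ∀ u : E, u ≠ 0 → 0 < ⟪A u, u⟫_ℝ)
    {n : ℕ} (hprev : ∀ m ≤ n, CGOrthogonalAt A p r m) (hnz : ∀ j ≤ n, r j ≠ 0) {i : ℕ}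
    (hi : 1 ≤ i) (hin : i ≤ n + 1) : ⟪r (n + 1), p i⟫_ℝ = 0 := by
  have hn := hprev n le_rfl
  rw [h.residual_succ, inner_sub_left, real_inner_smul_left]
  rcases hin.lt_or_eq with hlt | rfl
  · rw [hn.residual_direction i hi (by omega), inner_apply_comm hA,
      h.inner_apply_direction_succ_eq_zero hpos hprev hnz hi hlt, mul_zero, sub_zero]
  · rw [h.inner_direction_succ fun hn1 => hn.residual_direction n hn1 le_rfl,
      real_inner_self_eq_norm_sq, (h.alpha_ne_zero_and_mul_inner_apply hpos (hnz n le_rfl) hn).2, sub_self]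

theorem inner_residual_residual_succ_eq_zero (h : IsCGSequence A b x p r α β)
    (hA : ∀ u v : E, ⟪A u, v⟫_ℝ = ⟪u, A v⟫_ℝ) (hpos : ∀ u : E, u ≠ 0 → 0 < ⟪A u, u⟫_ℝ)
    {n : ℕ} (hprev : ∀ m ≤ n, CGOrthogonalAt A p r m) (hnz : ∀ j ≤ n, r j ≠ 0) {i : ℕ}
    (hin : i < n + 1) : ⟪r i, r (n + 1)⟫_ℝ = 0 := by
  have hn := hprev n le_rfl
  have hconj : ∀ m, 1 ≤ m → m < n + 1 → ⟪A (p (n + 1)), p m⟫_ℝ = 0 := fun m hm hmn => by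
    rw [inner_apply_comm hA, h.inner_apply_direction_succ_eq_zero hpos hprev hnz hm hmn]
  rw [h.residual_succ, inner_sub_right, real_inner_smul_right, real_inner_comm (A _),
    ← h.inner_direction_succ fun hi1 => hconj i hi1 hin]
  rcases (Nat.lt_succ_iff.1 hin).lt_or_eq with hlt | rfl
  · rw [hn.residual i hlt, hconj (i + 1) (by omega) (by omega), mul_zero, sub_zero]
  · rw [real_inner_self_eq_norm_sq, (h.alpha_ne_zero_and_mul_inner_apply hpos (hnz i le_rfl) hn).2, sub_self]

theorem cgOrthogonalAt (h : IsCGSequence A b x p r α β)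
    (hA : ∀ u v : E, ⟪A u, v⟫_ℝ = ⟪u, A v⟫_ℝ) (hpos : ∀ u : E, u ≠ 0 → 0 < ⟪A u, u⟫_ℝ)
    {N : ℕ} (hnz : ∀ j < N, r j ≠ 0) {n : ℕ} (hn : n ≤ N) : CGOrthogonalAt A p r n := by
  induction n using Nat.strong_induction_on with
  | _ n ih =>
    rcases n with _ | n
    · exact ⟨fun i hi => by omega, fun i hi hi' => by omega, fun i hi hi' => by omega⟩
    · have hprev : ∀ m ≤ n, CGOrthogonalAt A p r m := fun m hm => ih m (by omega) (by omega)
      have hnz' : ∀ j ≤ n, r j ≠ 0 := fun j hj => hnz j (by omega)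
      exact ⟨fun i => h.inner_residual_residual_succ_eq_zero hA hpos hprev hnz',
        fun i => h.inner_apply_direction_succ_eq_zero hpos hprev hnz',
        fun i => h.inner_residual_succ_direction_eq_zero hA hpos hprev hnz'⟩

theorem direction_mem_prefixSpan (h : IsCGSequence A b x p r α β) (j : ℕ) :
    p (j + 1) ∈ prefixSpan r (j + 1) := by
  induction j with
  | zero => rw [h.direction_one]; exact mem_prefixSpan zero_lt_one
  | succ j ih =>
    rw [h.direction_succ (j + 1) (by omega)]
    exact add_mem (Submodule.smul_mem _ _ (prefixSpan_mono r j.succ.le_succ ih))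
      (mem_prefixSpan (j + 1).lt_succ_self)

theorem iterate_sub_mem_prefixSpan (h : IsCGSequence A b x p r α β) (j : ℕ) :
    x j - x 0 ∈ prefixSpan r j := by
  induction j with
  | zero => rw [sub_self]; exact zero_mem _
  | succ j ih =>
    rw [h.iterate_succ, add_sub_right_comm]
    exact add_mem (prefixSpan_mono r j.le_succ ih)
      (Submodule.smul_mem _ _ (h.direction_mem_prefixSpan j))

theorem apply_residual_mem_prefixSpan (h : IsCGSequence A b x p r α β)
    (hA : ∀ u v : E, ⟪A u, v⟫_ℝ = ⟪u, A v⟫_ℝ) (hpos : ∀ u : E, u ≠ 0 → 0 < ⟪A u, u⟫_ℝ)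
    {N : ℕ} (hnz : ∀ j < N, r j ≠ 0) {j : ℕ} (hj : j < N) :
    A (r j) ∈ prefixSpan r (j + 2) := by
  have hAp : ∀ i ≤ j, A (p (i + 1)) ∈ prefixSpan r (j + 2) := fun i hi => by
    rw [h.apply_direction (h.alpha_ne_zero_and_mul_inner_apply hpos (hnz i (by omega))
      (h.cgOrthogonalAt hA hpos hnz (by omega))).1]
    exact Submodule.smul_mem _ _ (sub_mem (mem_prefixSpan (by omega)) (mem_prefixSpan (by omega)))
  rcases j with _ | j
  · rw [← h.direction_one]; exact hAp 0 le_rfl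
  · rw [show r (j + 1) = p (j + 2) - β (j + 2) • p (j + 1) by
      rw [h.direction_succ (j + 1) (by omega)]; abel, map_sub, map_smul]
    exact sub_mem (hAp (j + 1) le_rfl) (Submodule.smul_mem _ _ (hAp j (by omega)))

theorem krylov_le_prefixSpan (h : IsCGSequence A b x p r α β)
    (hA : ∀ u v : E, ⟪A u, v⟫_ℝ = ⟪u, A v⟫_ℝ) (hpos : ∀ u : E, u ≠ 0 → 0 < ⟪A u, u⟫_ℝ)
    {N : ℕ} (hnz : ∀ j < N, r j ≠ 0) : krylov A (r 0) N ≤ prefixSpan r N := by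
  refine krylov_le_of_apply_mem (prefixSpan_mono r) (mem_prefixSpan zero_lt_one) fun t ht z hz => ?_
  induction hz using Submodule.span_induction with
  | mem _ hw =>
    obtain ⟨j, hj, rfl⟩ := hw
    exact prefixSpan_mono r (show j + 2 ≤ t + 1 by simp at hj; omega)
      (h.apply_residual_mem_prefixSpan hA hpos hnz (by simp at hj; omega))
  | zero => simp
  | add _ _ _ _ h₁ h₂ => simpa using add_mem h₁ h₂
  | smul c _ _ h => simpa using Submodule.smul_mem _ c h

theorem inner_apply_sub_le_of_mem_krylov (h : IsCGSequence A b x p r α β)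
    (hA : ∀ u v : E, ⟪A u, v⟫_ℝ = ⟪u, A v⟫_ℝ) (hpos : ∀ u : E, u ≠ 0 → 0 < ⟪A u, u⟫_ℝ)
    {xs : E} (hxs : A xs = b) {k : ℕ} (hnz : ∀ j < k, r j ≠ 0) {z : E}
    (hz : z - x 0 ∈ krylov A (r 0) k) :
    ⟪A (x k - xs), x k - xs⟫_ℝ ≤ ⟪A (z - xs), z - xs⟫_ℝ := by
  have hd : z - x k ∈ prefixSpan r k := by
    rw [← sub_sub_sub_cancel_right z (x k) (x 0)]
    exact sub_mem (h.krylov_le_prefixSpan hA hpos hnz hz) (h.iterate_sub_mem_prefixSpan k)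
  have hgrad : A (x k - xs) = -r k := by rw [h.residual_eq, map_sub, hxs, neg_sub]
  rw [show z - xs = (x k - xs) + (z - x k) by abel]
  refine inner_apply_self_le_inner_apply_add hA ?_ ?_
  · rcases eq_or_ne (z - x k) 0 with h0 | h0
    · rw [h0, inner_zero_right]
    · exact (hpos _ h0).le
  · rw [hgrad, inner_neg_left, (h.cgOrthogonalAt hA hpos hnz le_rfl).inner_eq_zero_of_mem hd,
      neg_zero]

end IsCGSequence

end

theorem one_sub_pow_mul_le_div_one_add_pow {q C : ℝ} (hq0 : 0 ≤ q) (hq1 : q ≤ 1) (hC : 0 ≤ C)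
    (n : ℕ) : (1 - q) ^ n * C ≤ C / (1 + q) ^ n := by
  rw [le_div_iff₀ (by positivity), mul_right_comm, ← mul_pow]
  exact mul_le_of_le_one_left hC (pow_le_one₀ (by nlinarith) (by nlinarith))

theorem stmt12
    {E : Type*} [NormedAddCommGroup E] [InnerProductSpace ℝ E]
    (A : E →L[ℝ] E) (b : E)
    (hsymm : ∀ u v : E, ⟪A u, v⟫_ℝ = ⟪u, A v⟫_ℝ)
    (hpos : ∀ u : E, u ≠ 0 → 0 < ⟪A u, u⟫_ℝ)
    (f : E → ℝ) (hf : ∀ z : E, f z = ⟪z, A z⟫_ℝ / 2 - ⟪b, z⟫_ℝ)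
    (x p r : ℕ → E) (α β : ℕ → ℝ)
    (hr0 : r 0 = b - A (x 0))
    (hp1 : p 1 = r 0)
    (hβ : ∀ k ≥ 1, β (k + 1) = ‖r k‖ ^ 2 / ‖r (k - 1)‖ ^ 2)
    (hp : ∀ k ≥ 1, p (k + 1) = β (k + 1) • p k + r k)
    (hα : ∀ k, α (k + 1) = ‖r k‖ ^ 2 / ⟪A (p (k + 1)), p (k + 1)⟫_ℝ)
    (hx : ∀ k, x (k + 1) = x k + α (k + 1) • p (k + 1))
    (hrr : ∀ k, r (k + 1) = r k - α (k + 1) • A (p (k + 1)))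
    (xs : E) (hxs : A xs = b)
    (ℓ L : ℝ) (hℓ : 0 < ℓ) (hℓL : ℓ ≤ L)
    (hlow : ∀ u : E, ℓ * ‖u‖ ^ 2 ≤ ⟪A u, u⟫_ℝ)
    (hhigh : ∀ u : E, ⟪A u, u⟫_ℝ ≤ L * ‖u‖ ^ 2)
    (C₀ : ℝ) (hC₀ : C₀ = ℓ / 2 * ‖x 0 - xs‖ ^ 2 + (f (x 0) - f xs)) :
    ∀ k ≥ 1, (∀ j ≤ k, r j ≠ 0) →
      f (x k) - f xs ≤ C₀ / (1 + Real.sqrt (ℓ / L)) ^ (k - 1) := by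
  intro k _ hnz
  have hcg : IsCGSequence A b x p r α β := ⟨hr0, hp1, hβ, hp, hα, hx, hrr⟩
  have henergy := sub_eq_half_inner_apply_sub hsymm hf hxs
  obtain ⟨hq0, hq1, -⟩ := sqrt_div_pos_le_one hℓ hℓL
  set yv := (agdStep A b ℓ L)^[k - 1] (x 0, x 0)
  have hyv : yv.1 - x 0 ∈ krylov A (r 0) k := by
    rw [hr0]
    exact krylov_mono _ _ (k.sub_le 1) (agdStep_iterate_sub_mem_krylov A b (x 0) ℓ L _).1
  have hC : agdPotential A xs ℓ (x 0, x 0) = C₀ := by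
    rw [hC₀, henergy, agdPotential]
    ring
  have hC_nonneg : 0 ≤ C₀ := hC ▸ agdPotential_nonneg hℓ hlow _ _
  calc f (x k) - f xs ≤ f yv.1 - f xs := by
        rw [henergy, henergy]
        gcongr
        exact hcg.inner_apply_sub_le_of_mem_krylov hsymm hpos hxs (fun j hj => hnz j hj.le) hyv
    _ ≤ agdPotential A xs ℓ yv := by
        rw [henergy, agdPotential]
        have : 0 ≤ ℓ / 2 * ‖yv.2 - xs‖ ^ 2 := by positivity
        linarith
    _ ≤ (1 - Real.sqrt (ℓ / L)) ^ (k - 1) * C₀ :=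
        hC ▸ agdPotential_iterate_le hsymm hxs hℓ hℓL hlow hhigh _ _
    _ ≤ C₀ / (1 + Real.sqrt (ℓ / L)) ^ (k - 1) :=
        one_sub_pow_mul_le_div_one_add_pow hq0.le hq1 hC_nonneg _
end

section
/- In Nesterov's accelerated gradient method with ℓ-strongly convex, L-smooth f (ℓ < L), for k ≥ 1 the quantity t_4 = ⟨∇f(y_{k+1}), x* − y_{k+1}⟩ − ((√(L/ℓ)−1)²/(√(L/ℓ)+1))⟨∇f(y_{k+1}), s_k⟩ + ‖∇f(y_{k+1})‖²/(2√(Lℓ)) satisfies t_4 ≤ (√(L/ℓ)−1)(f(x_k)−f(x*)) − √(L/ℓ)(f(x_{k+1})−f(x*)) − (ℓ/2)‖y_{k+1}−x*‖². -/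
open scoped InnerProductSpace

set_option maxHeartbeats 1000000 in
theorem stmt13
    {E : Type*} [NormedAddCommGroup E] [InnerProductSpace ℝ E] [CompleteSpace E]
    (f : E → ℝ) (f' : E → E) (ℓ L : ℝ)
    (hℓ : 0 < ℓ) (hℓL : ℓ < L)
    (hgrad : ∀ z, HasGradientAt f (f' z) z)
    (hbound : ∀ u v : E,
      ℓ * ‖u - v‖ ^ 2 / 2 ≤ f v - f u - ⟪f' u, v - u⟫_ℝ ∧
      f v - f u - ⟪f' u, v - u⟫_ℝ ≤ L * ‖u - v‖ ^ 2 / 2)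
    (xs : E) (hxs : ∀ z, f xs ≤ f z)
    (x y s : ℕ → E) (θ : ℝ)
    (hθ : θ = (Real.sqrt L - Real.sqrt ℓ) / (Real.sqrt L + Real.sqrt ℓ))
    (hy1 : y 1 = x 0)
    (hy : ∀ k ≥ 1, y (k + 1) = x k + θ • s k)
    (hx : ∀ k, x (k + 1) = y (k + 1) - (1 / L) • f' (y (k + 1)))
    (hs : ∀ k ≥ 1, s k = x k - x (k - 1))
    : ∀ k ≥ 1,
      ⟪f' (y (k + 1)), xs - y (k + 1)⟫_ℝ
        - (Real.sqrt (L / ℓ) - 1) ^ 2 / (Real.sqrt (L / ℓ) + 1) * ⟪f' (y (k + 1)), s k⟫_ℝ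
        + ‖f' (y (k + 1))‖ ^ 2 / (2 * Real.sqrt (L * ℓ)) ≤
      (Real.sqrt (L / ℓ) - 1) * (f (x k) - f xs)
        - Real.sqrt (L / ℓ) * (f (x (k + 1)) - f xs)
        - ℓ / 2 * ‖y (k + 1) - xs‖ ^ 2 := by
  intro k hk
  have hL : (0:ℝ) < L := hℓ.trans hℓL
  set a := Real.sqrt ℓ with ha_def
  set b := Real.sqrt L with hb_def
  have ha : 0 < a := Real.sqrt_pos.2 hℓ
  have hb : 0 < b := Real.sqrt_pos.2 hL
  have hab : a < b := Real.sqrt_lt_sqrt hℓ.le hℓL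
  have ha2 : a ^ 2 = ℓ := Real.sq_sqrt hℓ.le
  have hb2 : b ^ 2 = L := Real.sq_sqrt hL.le
  have hκ : Real.sqrt (L / ℓ) = b / a := Real.sqrt_div hL.le ℓ
  have hml : Real.sqrt (L * ℓ) = b * a := Real.sqrt_mul hL.le ℓ
  set g := f' (y (k + 1)) with hg
  set N := ‖g‖ with hN
  -- A: strong convexity toward xs
  have hA := (hbound (y (k + 1)) xs).1
  -- B: strong convexity toward x k
  have hB := (hbound (y (k + 1)) (x k)).1
  -- C: smoothness toward x (k+1)
  have hC := (hbound (y (k + 1)) (x (k + 1))).2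
  have hxy : x k - y (k + 1) = -(θ • s k) := by
    rw [hy k hk]; abel
  have hxk1 : x (k + 1) - y (k + 1) = -((1 / L) • g) := by
    rw [hx k]; abel
  have hinnB : ⟪g, x k - y (k + 1)⟫_ℝ = -(θ * ⟪g, s k⟫_ℝ) := by
    rw [hxy, inner_neg_right, real_inner_smul_right]
  have hinnC : ⟪g, x (k + 1) - y (k + 1)⟫_ℝ = -((1 / L) * N ^ 2) := by
    rw [hxk1, inner_neg_right, real_inner_smul_right, real_inner_self_eq_norm_sq, hN]
  have hnormC : ‖y (k + 1) - x (k + 1)‖ = (1 / L) * N := by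
    have : y (k + 1) - x (k + 1) = (1 / L) • g := by rw [hx k]; abel
    rw [this, norm_smul, Real.norm_eq_abs, abs_of_pos (by positivity : (0:ℝ) < 1 / L)]
  rw [hinnB] at hB
  rw [hinnC, hnormC] at hC
  -- B': drop the nonneg term
  have hB' : -(θ * ⟪g, s k⟫_ℝ) ≤ f (x k) - f (y (k + 1)) := by
    nlinarith [sq_nonneg ‖y (k + 1) - x k‖, hℓ.le]
  -- C': descent
  have hC' : f (x (k + 1)) ≤ f (y (k + 1)) - N ^ 2 / (2 * L) := by
    have h : L * ((1 / L) * N) ^ 2 / 2 = N ^ 2 / (2 * L) := by field_simp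
    rw [h] at hC
    have h2 : (1 / L) * N ^ 2 = 2 * (N ^ 2 / (2 * L)) := by field_simp
    linarith
  -- A': rearranged
  have hA' : ⟪g, xs - y (k + 1)⟫_ℝ ≤ f xs - f (y (k + 1)) - ℓ / 2 * ‖y (k + 1) - xs‖ ^ 2 := by
    linarith
  rw [hκ, hml]
  have hθ' : θ = (b - a) / (b + a) := hθ
  have hba : (0:ℝ) < b + a := by linarith
  have h1 : (b / a - 1) ^ 2 / (b / a + 1) = (b / a - 1) * θ := by
    rw [hθ']; field_simp
  have h2 : N ^ 2 / (2 * (b * a)) = (b / a) * (N ^ 2 / (2 * L)) := by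
    rw [← hb2]; field_simp
  have hκ1 : (1:ℝ) < b / a := (one_lt_div ha).2 hab
  rw [h1, h2]
  nlinarith [mul_le_mul_of_nonneg_left hB' (by linarith : (0:ℝ) ≤ b / a - 1),
    mul_le_mul_of_nonneg_left hC' (by positivity : (0:ℝ) ≤ b / a)]
end

section
/- In Nesterov's accelerated gradient method, defining w_k = x_k + ρ s_k − x* with ρ = √(L/ℓ) − 1 and potential Ψ_k = ‖w_k‖² + (2/ℓ)(f(x_k) − f(x*)), one has C Ψ_{k+1} ≤ Ψ_k for all k ≥ 1, where C = 1 + 1/(√(L/ℓ) − 1). -/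
open scoped InnerProductSpace

lemma normsq3 {E : Type*} [NormedAddCommGroup E] [InnerProductSpace ℝ E]
    (a b c : ℝ) (u v z : E) :
    ‖a•u + b•v + c•z‖^2 = a^2*‖u‖^2 + b^2*‖v‖^2 + c^2*‖z‖^2
      + 2*(a*b)*⟪u,v⟫_ℝ + 2*(a*c)*⟪u,z⟫_ℝ + 2*(b*c)*⟪v,z⟫_ℝ := by
  rw [← real_inner_self_eq_norm_sq, ← real_inner_self_eq_norm_sq,
    ← real_inner_self_eq_norm_sq, ← real_inner_self_eq_norm_sq]
  simp only [inner_add_left, inner_add_right, real_inner_smul_left, real_inner_smul_right]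
  rw [real_inner_comm v u, real_inner_comm z u, real_inner_comm z v]
  ring

lemma scalar_final (q l A B G dp gd gp F0 F1 FY Fs : ℝ)
    (hl : 0 < l) (hq1 : 1 < q) (hA : 0 ≤ A)
    (h1 : l * A / 2 ≤ F0 - FY + gd)
    (h2 : l * B / 2 ≤ Fs - FY + gp)
    (h3 : 2*(l*q^2)*(F1 - FY) ≤ -G) :
    (1 + 1/(q-1)) * ((q-1)^2*A + 1^2*B + (-(1/(l*q)))^2*G + 2*((q-1)*1)*dp
        + 2*((q-1)*(-(1/(l*q))))*gd + 2*(1*(-(1/(l*q))))*gp + 2/l*(F1 - Fs))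
      ≤ q^2*A + 1^2*B + 0^2*G + 2*(q*1)*dp + 2*(q*0)*gd + 2*(1*0)*gp + 2/l*(F0 - Fs) := by
  have hq0 : 0 < q := by linarith
  have hq1' : 0 < q - 1 := by linarith
  have hD : (q^2*A + 1^2*B + 0^2*G + 2*(q*1)*dp + 2*(q*0)*gd + 2*(1*0)*gp + 2/l*(F0 - Fs))
      - (1 + 1/(q-1)) * ((q-1)^2*A + 1^2*B + (-(1/(l*q)))^2*G + 2*((q-1)*1)*dp
        + 2*((q-1)*(-(1/(l*q))))*gd + 2*(1*(-(1/(l*q))))*gp + 2/l*(F1 - Fs))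
      = (2*(F0 - FY + gd) - l*A)/l + (2*(Fs - FY + gp) - l*B)/(l*(q-1))
        + (-G - 2*(l*q^2)*(F1 - FY))/(l^2*q*(q-1)) + (q+1)*A := by
    field_simp
    ring
  have n1 : 0 ≤ (2*(F0 - FY + gd) - l*A)/l := by
    apply div_nonneg _ hl.le; linarith
  have n2 : 0 ≤ (2*(Fs - FY + gp) - l*B)/(l*(q-1)) := by
    apply div_nonneg _ (by positivity); linarith
  have n3 : 0 ≤ (-G - 2*(l*q^2)*(F1 - FY))/(l^2*q*(q-1)) := by
    apply div_nonneg _ (by positivity); linarith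
  nlinarith [mul_nonneg (by linarith : (0:ℝ) ≤ q + 1) hA]

theorem stmt14
    {E : Type*} [NormedAddCommGroup E] [InnerProductSpace ℝ E] [CompleteSpace E]
    (f : E → ℝ) (f' : E → E) (ℓ L : ℝ)
    (hℓ : 0 < ℓ) (hℓL : ℓ < L)
    (hgrad : ∀ z, HasGradientAt f (f' z) z)
    (hbound : ∀ u v : E,
      ℓ * ‖u - v‖ ^ 2 / 2 ≤ f v - f u - ⟪f' u, v - u⟫_ℝ ∧
      f v - f u - ⟪f' u, v - u⟫_ℝ ≤ L * ‖u - v‖ ^ 2 / 2)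
    (xs : E) (hxs : ∀ z, f xs ≤ f z)
    (x y s : ℕ → E) (θ : ℝ)
    (hθ : θ = (Real.sqrt L - Real.sqrt ℓ) / (Real.sqrt L + Real.sqrt ℓ))
    (hy1 : y 1 = x 0)
    (hy : ∀ k ≥ 1, y (k + 1) = x k + θ • s k)
    (hx : ∀ k, x (k + 1) = y (k + 1) - (1 / L) • f' (y (k + 1)))
    (hs : ∀ k ≥ 1, s k = x k - x (k - 1))
    (ρ : ℝ) (hρ : ρ = Real.sqrt (L / ℓ) - 1)
    (w : ℕ → E) (hw : ∀ k ≥ 1, w k = x k + ρ • s k - xs)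
    (Ψ : ℕ → ℝ) (hΨ : ∀ k ≥ 1, Ψ k = ‖w k‖ ^ 2 + 2 / ℓ * (f (x k) - f xs)) :
    ∀ k ≥ 1, (1 + 1 / (Real.sqrt (L / ℓ) - 1)) * Ψ (k + 1) ≤ Ψ k := by
  intro k hk
  have hL : 0 < L := hℓ.trans hℓL
  set q := Real.sqrt (L / ℓ) with hqdef
  have hq2 : q ^ 2 = L / ℓ := Real.sq_sqrt (by positivity)
  have hq1 : 1 < q := by
    have hd : (1:ℝ) < L / ℓ := (one_lt_div hℓ).2 hℓL
    nlinarith [Real.sqrt_nonneg (L/ℓ)]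
  have hq0 : 0 < q := one_pos.trans hq1
  have hLq : L = ℓ * q ^ 2 := by
    rw [hq2]; field_simp
  have hsl : (0:ℝ) < Real.sqrt ℓ := Real.sqrt_pos.2 hℓ
  have hsL : (0:ℝ) < Real.sqrt L := Real.sqrt_pos.2 hL
  have hqeq : q = Real.sqrt L / Real.sqrt ℓ := by
    rw [hqdef, Real.sqrt_div hL.le]
  have hθq : (q + 1) * θ = q - 1 := by
    rw [hθ, hqeq]
    field_simp
  have hyk : y (k+1) = x k + θ • s k := hy k hk
  have hsk1 : s (k+1) = x (k+1) - x k := by simpa using hs (k+1) (by omega)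
  have hwk := hw k hk
  have hwk1 := hw (k+1) (by omega)
  have hΨk := hΨ k hk
  have hΨk1 := hΨ (k+1) (by omega)
  have hxk1 := hx k
  set Y := y (k+1) with hY
  set X := x k with hX
  set g := f' Y with hg
  -- vector identities
  have hw1 : w k = q • (Y - X) + (1:ℝ) • (Y - xs) + (0:ℝ) • g := by
    rw [hwk, hρ]
    have h1 : (q - 1) • s k = (q+1) • (θ • s k) := by rw [smul_smul, hθq]
    have h2 : θ • s k = Y - X := by rw [hyk]; abel
    rw [h1, h2]; module
  have hw2 : w (k+1) = (q - 1) • (Y - X) + (1:ℝ) • (Y - xs) + (-(q / L)) • g := by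
    rw [hwk1, hρ, hsk1, hxk1]; module
  have hqL : q / L = 1/(ℓ*q) := by
    rw [hLq]; field_simp
  rw [hqL] at hw2
  have e1 : ‖w k‖^2 = q^2*‖Y-X‖^2 + 1^2*‖Y-xs‖^2 + 0^2*‖g‖^2
      + 2*(q*1)*⟪Y-X, Y-xs⟫_ℝ + 2*(q*0)*⟪Y-X, g⟫_ℝ + 2*(1*0)*⟪Y-xs, g⟫_ℝ := by
    rw [hw1, normsq3]
  have e2 : ‖w (k+1)‖^2 = (q-1)^2*‖Y-X‖^2 + 1^2*‖Y-xs‖^2 + (-(1/(ℓ*q)))^2*‖g‖^2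
      + 2*((q-1)*1)*⟪Y-X, Y-xs⟫_ℝ + 2*((q-1)*(-(1/(ℓ*q))))*⟪Y-X, g⟫_ℝ
      + 2*(1*(-(1/(ℓ*q))))*⟪Y-xs, g⟫_ℝ := by
    rw [hw2, normsq3]
  -- inequality S1
  have hS1 : ℓ * ‖Y - X‖^2 / 2 ≤ f X - f Y + ⟪Y - X, g⟫_ℝ := by
    have h := (hbound Y X).1
    have hXY : X - Y = -(Y - X) := by abel
    rw [hXY, inner_neg_right, real_inner_comm] at h
    linarith
  have hS2 : ℓ * ‖Y - xs‖^2 / 2 ≤ f xs - f Y + ⟪Y - xs, g⟫_ℝ := by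
    have h := (hbound Y xs).1
    have hXY : xs - Y = -(Y - xs) := by abel
    rw [hXY, inner_neg_right, real_inner_comm] at h
    linarith
  -- inequality S3 (descent)
  have hS3 : 2*(ℓ*q^2)*(f (x (k+1)) - f Y) ≤ -‖g‖^2 := by
    have h := (hbound Y (x (k+1))).2
    have h1 : x (k+1) - Y = -((1/L) • g) := by rw [hxk1]; abel
    have h2 : Y - x (k+1) = (1/L) • g := by rw [hxk1]; abel
    rw [h1, h2, inner_neg_right, real_inner_smul_right, real_inner_self_eq_norm_sq,
      norm_smul, Real.norm_eq_abs, abs_of_pos (by positivity : (0:ℝ) < 1/L)] at h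
    have key : L * (1/L * ‖g‖)^2 / 2 = 1/L * ‖g‖^2 / 2 := by
      field_simp
    rw [key, ← hg] at h
    have h3 : f (x (k+1)) - f Y ≤ -(1/L * ‖g‖^2 / 2) := by linarith
    calc 2*(ℓ*q^2)*(f (x (k+1)) - f Y) = 2*L*(f (x (k+1)) - f Y) := by rw [hLq]
      _ ≤ 2*L*(-(1/L * ‖g‖^2 / 2)) :=
          mul_le_mul_of_nonneg_left h3 (by positivity)
      _ = -‖g‖^2 := by field_simp
  rw [hΨk, hΨk1, e1, e2]
  exact scalar_final q ℓ (‖Y-X‖^2) (‖Y-xs‖^2) (‖g‖^2) (⟪Y-X, Y-xs⟫_ℝ) (⟪Y-X, g⟫_ℝ)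
    (⟪Y-xs, g⟫_ℝ) (f X) (f (x (k+1))) (f Y) (f xs) hℓ hq1 (by positivity) hS1 hS2 hS3
end

section
/- For the first step of Nesterov's accelerated gradient method (y_1 = x_0, x_1 = x_0 − ∇f(x_0)/L), the potential satisfies Ψ_1 ≤ Ψ_0, where Ψ_0 = ‖x_0 − x*‖² + (2/ℓ)(f(x_0) − f(x*)) and Ψ_1 = ‖x_1 + ρ(x_1 − x_0) − x*‖² + (2/ℓ)(f(x_1) − f(x*)) with ρ = √(L/ℓ) − 1. -/
open scoped InnerProductSpace

theorem stmt15
    {E : Type*} [NormedAddCommGroup E] [InnerProductSpace ℝ E] [CompleteSpace E]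
    (f : E → ℝ) (f' : E → E) (ℓ L : ℝ)
    (hℓ : 0 < ℓ) (hℓL : ℓ < L)
    (hgrad : ∀ z, HasGradientAt f (f' z) z)
    (hbound : ∀ u v : E,
      ℓ * ‖u - v‖ ^ 2 / 2 ≤ f v - f u - ⟪f' u, v - u⟫_ℝ ∧
      f v - f u - ⟪f' u, v - u⟫_ℝ ≤ L * ‖u - v‖ ^ 2 / 2)
    (xs : E) (hxs : ∀ z, f xs ≤ f z)
    (x₀ x₁ : E) (hx1 : x₁ = x₀ - (1 / L) • f' x₀)
    (ρ : ℝ) (hρ : ρ = Real.sqrt (L / ℓ) - 1)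
    (Ψ₀ Ψ₁ : ℝ)
    (hΨ₀ : Ψ₀ = ‖x₀ - xs‖ ^ 2 + 2 / ℓ * (f x₀ - f xs))
    (hΨ₁ : Ψ₁ = ‖x₁ + ρ • (x₁ - x₀) - xs‖ ^ 2 + 2 / ℓ * (f x₁ - f xs)) :
    Ψ₁ ≤ Ψ₀ := by
  have hL : 0 < L := hℓ.trans hℓL
  set g := f' x₀ with hg
  set a := x₀ - xs with ha
  set c : ℝ := (1 + ρ) / L with hc
  -- c = sqrt(L/ℓ)/L, c ≥ 0, c² = 1/(L*ℓ)
  have hsq : Real.sqrt (L / ℓ) ^ 2 = L / ℓ := Real.sq_sqrt (by positivity)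
  have hcval : c = Real.sqrt (L / ℓ) / L := by rw [hc, hρ]; ring
  have hc0 : 0 ≤ c := by rw [hcval]; positivity
  have hc2 : c ^ 2 = 1 / (L * ℓ) := by
    rw [hcval, div_pow, hsq]; field_simp
  -- point rewrite
  have hpt : x₁ + ρ • (x₁ - x₀) - xs = a - c • g := by
    rw [hx1, ha, hc]
    have : c • g = ((1 + ρ) * (1 / L)) • g := by rw [hc]; ring_nf
    module
  -- norm expansion
  have hexp : ‖a - c • g‖ ^ 2 = ‖a‖ ^ 2 - 2 * c * ⟪g, a⟫_ℝ + c ^ 2 * ‖g‖ ^ 2 := by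
    rw [@norm_sub_sq_real, inner_smul_right, norm_smul, real_inner_comm]
    rw [Real.norm_eq_abs, mul_pow, sq_abs]
    ring
  -- convexity: f x₀ - f xs ≤ ⟪g, a⟫
  have h1 : f x₀ - f xs ≤ ⟪g, a⟫_ℝ := by
    have := (hbound x₀ xs).1
    have hi : ⟪g, xs - x₀⟫_ℝ = -⟪g, a⟫_ℝ := by
      rw [ha, ← inner_neg_right, neg_sub]
    rw [hi] at this
    nlinarith [sq_nonneg ‖x₀ - xs‖]
  have h0 : 0 ≤ f x₀ - f xs := by linarith [hxs x₀]
  -- descent: f x₁ ≤ f x₀ - ‖g‖²/(2L)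
  have h2 : f x₁ ≤ f x₀ - ‖g‖ ^ 2 / (2 * L) := by
    have := (hbound x₀ x₁).2
    have hi : ⟪g, x₁ - x₀⟫_ℝ = -(1 / L) * ‖g‖ ^ 2 := by
      rw [hx1]
      simp [inner_smul_right, real_inner_self_eq_norm_sq]
    have hn : ‖x₀ - x₁‖ ^ 2 = (1 / L) ^ 2 * ‖g‖ ^ 2 := by
      rw [hx1]
      have : x₀ - (x₀ - (1 / L) • g) = (1 / L) • g := by abel
      rw [this, norm_smul, Real.norm_eq_abs, mul_pow, sq_abs]
    have e : L * ((1 / L) ^ 2 * ‖g‖ ^ 2) / 2 = ‖g‖ ^ 2 / (2 * L) := by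
      field_simp
    rw [hi, hn, e] at this
    have e2 : (1 / L) * ‖g‖ ^ 2 = 2 * (‖g‖ ^ 2 / (2 * L)) := by ring
    linarith
  have hgge : 0 ≤ ⟪g, a⟫_ℝ := le_trans h0 h1
  rw [hΨ₀, hΨ₁, hpt, hexp, hc2]
  have hℓ' : (0:ℝ) < L * ℓ := by positivity
  have key : 2 / ℓ * (f x₀ - f x₁) ≥ 2 / ℓ * (‖g‖ ^ 2 / (2 * L)) := by
    apply mul_le_mul_of_nonneg_left (by linarith) (by positivity)
  have : 2 / ℓ * (‖g‖ ^ 2 / (2 * L)) = 1 / (L * ℓ) * ‖g‖ ^ 2 := by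
    field_simp
  have h2c : 0 ≤ 2 * c * ⟪g, a⟫_ℝ := by positivity
  linarith [key, this]
end

section
/- Nesterov's accelerated gradient method on an ℓ-strongly convex, L-smooth function satisfies f(x_k) − f(x*) ≤ C_0 (1 + √(ℓ/L))^{−(k−1)} for all k ≥ 1, where C_0 = (ℓ/2)‖x_0 − x*‖² + f(x_0) − f(x*). -/
open scoped InnerProductSpace

lemma helper_step (τ L l c fp fx fy fs B D G bd bg dg : ℝ)
    (hτ0 : 0 < τ) (hτ1 : τ < 1) (hL : 0 < L) (hl : l = τ^2*L) (hc : c*(τ*L) = 1)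
    (h1 : fp ≤ fy - τ*c/2*G)
    (h2 : fy + τ*dg + l*τ^2/2*D ≤ fx)
    (h3 : fy - bg + l/2*B ≤ fs)
    (hD : 0 ≤ D) :
    fp - fs + l/2*(B + (1-τ)^2*D + c^2*G - 2*(1-τ)*bd - 2*c*bg + 2*(1-τ)*c*dg)
      ≤ (1-τ)*(fx - fs + l/2*(B - 2*bd + D)) := by
  subst hl
  have s2 : (1-τ)*(fy + τ*dg + (τ^2*L)*τ^2/2*D) ≤ (1-τ)*fx :=
    mul_le_mul_of_nonneg_left h2 (by linarith)
  have s3 : τ*(fy - bg + (τ^2*L)/2*B) ≤ τ*fs := mul_le_mul_of_nonneg_left h3 hτ0.le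
  have s4 : 0 ≤ (τ^2*L)/2*((1-τ)*(τ^2+τ))*D := by
    apply mul_nonneg (mul_nonneg (by positivity) (by nlinarith)) hD
  have hcG : (τ^2*L)/2*(c^2*G) = τ*c/2*G := by linear_combination (τ*c*G/2) * hc
  have hcbg : (τ^2*L)/2*(2*c*bg) = τ*bg := by linear_combination (τ*bg) * hc
  have hcdg : (τ^2*L)/2*(2*(1-τ)*c*dg) = τ*(1-τ)*dg := by
    linear_combination ((1-τ)*τ*dg) * hc
  linarith

lemma expand3 {E' : Type*} [NormedAddCommGroup E'] [InnerProductSpace ℝ E']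
    (p q : ℝ) (b d g : E') :
    ‖b - p•d - q•g‖^2 = ‖b‖^2 + p^2*‖d‖^2 + q^2*‖g‖^2
      - 2*p*⟪b,d⟫_ℝ - 2*q*⟪b,g⟫_ℝ + 2*p*q*⟪d,g⟫_ℝ := by
  simp only [← real_inner_self_eq_norm_sq]
  simp only [inner_sub_left, inner_sub_right, inner_smul_left, inner_smul_right, conj_trivial]
  rw [real_inner_comm d b, real_inner_comm g b, real_inner_comm g d]
  ring

set_option maxHeartbeats 1000000 in
theorem stmt16
    {E : Type*} [NormedAddCommGroup E] [InnerProductSpace ℝ E] [CompleteSpace E]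
    (f : E → ℝ) (f' : E → E) (ℓ L : ℝ)
    (hℓ : 0 < ℓ) (hℓL : ℓ < L)
    (hgrad : ∀ z, HasGradientAt f (f' z) z)
    (hbound : ∀ u v : E,
      ℓ * ‖u - v‖ ^ 2 / 2 ≤ f v - f u - ⟪f' u, v - u⟫_ℝ ∧
      f v - f u - ⟪f' u, v - u⟫_ℝ ≤ L * ‖u - v‖ ^ 2 / 2)
    (xs : E) (hxs : ∀ z, f xs ≤ f z)
    (x y s : ℕ → E) (θ : ℝ)
    (hθ : θ = (Real.sqrt L - Real.sqrt ℓ) / (Real.sqrt L + Real.sqrt ℓ))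
    (hy1 : y 1 = x 0)
    (hy : ∀ k ≥ 1, y (k + 1) = x k + θ • s k)
    (hx : ∀ k, x (k + 1) = y (k + 1) - (1 / L) • f' (y (k + 1)))
    (hs : ∀ k ≥ 1, s k = x k - x (k - 1))
    (C₀ : ℝ) (hC₀ : C₀ = ℓ / 2 * ‖x 0 - xs‖ ^ 2 + (f (x 0) - f xs)) :
    ∀ k ≥ 1, f (x k) - f xs ≤ C₀ / (1 + Real.sqrt (ℓ / L)) ^ (k - 1) := by
  have hL : 0 < L := hℓ.trans hℓL
  set τ : ℝ := Real.sqrt (ℓ / L) with hτdef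
  have hτ0 : 0 < τ := Real.sqrt_pos.2 (div_pos hℓ hL)
  have hτsq : τ^2 = ℓ / L := Real.sq_sqrt (div_pos hℓ hL).le
  have hℓτ : ℓ = τ^2 * L := by rw [hτsq]; field_simp
  have hτ1 : τ < 1 := by
    nlinarith [hτsq, (div_lt_one hL).2 hℓL]
  -- θ relation
  have hsl : Real.sqrt ℓ = τ * Real.sqrt L := by
    rw [hτdef, Real.sqrt_div hℓ.le]
    field_simp
  have hsL : 0 < Real.sqrt L := Real.sqrt_pos.2 hL
  have hθ1 : θ * (1 + τ) = 1 - τ := by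
    rw [hθ, hsl, div_mul_eq_mul_div, div_eq_iff (by positivity)]
    ring
  -- auxiliary sequence v
  set v : ℕ → E := fun k => Nat.rec (x 0) (fun n _ => x (n+1) + ((1-τ)/τ) • (x (n+1) - x n)) k
    with hvdef
  have hv0 : v 0 = x 0 := rfl
  have hvS : ∀ n, v (n+1) = x (n+1) + ((1-τ)/τ) • (x (n+1) - x n) := fun n => rfl
  -- key relation
  have hrel : ∀ k, x k + τ • v k = (1+τ) • y (k+1) := by
    intro k
    cases k with
    | zero => rw [hy1, hv0]; module
    | succ n =>
        have hθ2 : θ = (1-τ)/(1+τ) := by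
          rw [eq_div_iff (by positivity)]; exact hθ1
        rw [hy (n+1) (by omega), hs (n+1) (by omega), hvS n, hθ2]
        simp only [Nat.add_sub_cancel]
        match_scalars <;> field_simp [hτ0.ne'] <;> ring
  -- potential
  set Φ : ℕ → ℝ := fun k => f (x k) - f xs + ℓ/2 * ‖v k - xs‖^2 with hΦdef
  set c : ℝ := 1/(τ*L) with hcdef
  have hc : c*(τ*L) = 1 := by rw [hcdef]; field_simp
  have step : ∀ k, Φ (k+1) ≤ (1-τ) * Φ k := by
    intro k
    set Y : E := y (k+1) with hY
    set g : E := f' Y with hg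
    set b : E := Y - xs with hbdef
    set d : E := Y - v k with hddef
    have hxk : x k - Y = τ • d := by
      rw [hddef]
      linear_combination (norm := module) hrel k
    have hvk : v k - xs = b - d := by rw [hbdef, hddef]; abel
    have hx1 : x (k+1) = Y - (1/L) • g := hx k
    have hvs1 : v (k+1) - xs = b - (1-τ)•d - c•g := by
      have hxk' : x k = Y + τ • d := by linear_combination (norm := module) hxk
      rw [hvS k, hx1, hxk', hbdef, hcdef]
      match_scalars <;> field_simp [hτ0.ne'] <;> ring
    -- scalar inequalities
    have e1 : ⟪g, x (k+1) - Y⟫_ℝ = -(1/L)*‖g‖^2 := by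
      rw [show x (k+1) - Y = -((1/L) • g) by rw [hx1]; abel]
      rw [inner_neg_right, real_inner_smul_right, real_inner_self_eq_norm_sq]
      ring
    have e2 : ‖Y - x (k+1)‖^2 = (1/L)^2*‖g‖^2 := by
      rw [show Y - x (k+1) = (1/L) • g by rw [hx1]; abel]
      rw [norm_smul, mul_pow, Real.norm_eq_abs, sq_abs]
    have h1 : f (x (k+1)) ≤ f Y - τ*c/2*‖g‖^2 := by
      have hb1 := (hbound Y (x (k+1))).2
      rw [← hg, e1, e2] at hb1
      have htc : τ*c = 1/L := by rw [hcdef]; field_simp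
      have hA : L*((1/L)^2*‖g‖^2)/2 = 1/L*‖g‖^2/2 := by field_simp
      have hB : τ*c/2*‖g‖^2 = 1/L*‖g‖^2/2 := by linear_combination (‖g‖^2/2)*htc
      linarith [hb1]
    have e3 : ⟪g, x k - Y⟫_ℝ = τ * ⟪d,g⟫_ℝ := by
      rw [hxk, real_inner_smul_right, real_inner_comm]
    have e4 : ‖Y - x k‖^2 = τ^2 * ‖d‖^2 := by
      rw [← norm_neg, show -(Y - x k) = τ • d by rw [← hxk]; abel, norm_smul, mul_pow,
        Real.norm_eq_abs, sq_abs]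
    have h2 : f Y + τ*⟪d,g⟫_ℝ + ℓ*τ^2/2*‖d‖^2 ≤ f (x k) := by
      have hb2 := (hbound Y (x k)).1
      rw [← hg, e3, e4] at hb2
      nlinarith [hb2]
    have e5 : ⟪g, xs - Y⟫_ℝ = -⟪b,g⟫_ℝ := by
      rw [show xs - Y = -b by rw [hbdef]; abel, inner_neg_right, real_inner_comm]
    have e6 : ‖Y - xs‖^2 = ‖b‖^2 := by rw [hbdef]
    have h3 : f Y - ⟪b,g⟫_ℝ + ℓ/2*‖b‖^2 ≤ f xs := by
      have hb3 := (hbound Y xs).1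
      rw [← hg, e5, e6] at hb3
      linarith
    have hn1 : ‖v (k+1) - xs‖^2 = ‖b‖^2 + (1-τ)^2*‖d‖^2 + c^2*‖g‖^2
        - 2*(1-τ)*⟪b,d⟫_ℝ - 2*c*⟪b,g⟫_ℝ + 2*(1-τ)*c*⟪d,g⟫_ℝ := by
      rw [hvs1]; exact expand3 (1-τ) c b d g
    have hn0 : ‖v k - xs‖^2 = ‖b‖^2 - 2*⟪b,d⟫_ℝ + ‖d‖^2 := by
      rw [hvk, norm_sub_sq_real]
    show f (x (k+1)) - f xs + ℓ/2 * ‖v (k+1) - xs‖^2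
        ≤ (1-τ) * (f (x k) - f xs + ℓ/2 * ‖v k - xs‖^2)
    rw [hn1, hn0]
    exact helper_step τ L ℓ c (f (x (k+1))) (f (x k)) (f Y) (f xs) (‖b‖^2) (‖d‖^2) (‖g‖^2)
      (⟪b,d⟫_ℝ) (⟪b,g⟫_ℝ) (⟪d,g⟫_ℝ) hτ0 hτ1 hL hℓτ hc h1 h2 h3 (by positivity)
  have hdecay : ∀ k, Φ k ≤ (1-τ)^k * Φ 0 := by
    intro k
    induction k with
    | zero => simp
    | succ n ih =>
        calc Φ (n+1) ≤ (1-τ) * Φ n := step n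
          _ ≤ (1-τ) * ((1-τ)^n * Φ 0) := mul_le_mul_of_nonneg_left ih (by linarith)
          _ = (1-τ)^(n+1) * Φ 0 := by ring
  have hΦ0 : Φ 0 = C₀ := by
    show f (x 0) - f xs + ℓ/2 * ‖v 0 - xs‖^2 = C₀
    rw [hv0, hC₀]; ring
  have hC0 : 0 ≤ C₀ := by
    have h0 := hxs (x 0)
    have : (0:ℝ) ≤ ℓ/2 * ‖x 0 - xs‖^2 := by positivity
    rw [hC₀]; linarith
  intro k hk
  have hfk : f (x k) - f xs ≤ Φ k := by
    show f (x k) - f xs ≤ f (x k) - f xs + ℓ/2 * ‖v k - xs‖^2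
    have : (0:ℝ) ≤ ℓ/2 * ‖v k - xs‖^2 := by positivity
    linarith
  have h1 : f (x k) - f xs ≤ (1-τ)^k * C₀ := by
    rw [← hΦ0]; exact hfk.trans (hdecay k)
  have h2 : (1-τ)^k * C₀ ≤ (1-τ)^(k-1) * C₀ := by
    apply mul_le_mul_of_nonneg_right _ hC0
    exact pow_le_pow_of_le_one (by linarith) (by linarith) (Nat.sub_le k 1)
  have h3 : (1-τ)^(k-1) * C₀ ≤ C₀ / (1+τ)^(k-1) := by
    rw [le_div_iff₀ (by positivity)]
    calc (1-τ)^(k-1) * C₀ * (1+τ)^(k-1) = ((1-τ)*(1+τ))^(k-1) * C₀ := by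
          rw [mul_pow]; ring
      _ ≤ 1 * C₀ := by
          apply mul_le_mul_of_nonneg_right _ hC0
          apply pow_le_one₀ (by nlinarith) (by nlinarith)
      _ = C₀ := one_mul C₀
  linarith
end

section
/- For 0 < ℓ < L, the quantity ξ² defined by the ratio (ρ − θ)/((1+ρ)ν − θ) with ρ = √(L/ℓ) − 1 and θ = ν = (√L − √ℓ)/(√L + √ℓ) equals 1 + 1/(√(L/ℓ) − 1), and in particular ξ² ≥ 1 + √(ℓ/L). -/
/-! With `x = √(L/ℓ) > 1` one has `ρ = x - 1` and `θ = (x - 1)/(x + 1)`, so the denominator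
`(1 + ρ)θ - θ = ρθ` and `ξ² = (ρ - θ)/(ρθ) = x/(x - 1) = 1 + 1/(x - 1)`, which dominates
`1 + 1/x = 1 + √(ℓ/L)`. -/

namespace Real

lemma sqrt_sub_sqrt_div_sqrt_add_sqrt {ℓ : ℝ} (L : ℝ) (hℓ : 0 < ℓ) :
    (√L - √ℓ) / (√L + √ℓ) = (√(L / ℓ) - 1) / (√(L / ℓ) + 1) := by
  have hsqrtℓ : 0 < √ℓ := sqrt_pos.2 hℓ
  rw [sqrt_div' L hℓ.le]
  field_simp

lemma one_lt_sqrt_div {ℓ L : ℝ} (hℓ : 0 < ℓ) (hℓL : ℓ < L) : 1 < √(L / ℓ) := by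
  rw [lt_sqrt zero_le_one, one_pow, one_lt_div hℓ]
  exact hℓL

lemma sqrt_div_eq_inv_sqrt_div (ℓ L : ℝ) : √(ℓ / L) = (√(L / ℓ))⁻¹ := by
  rw [← sqrt_inv, inv_div]

end Real

lemma div_sub_div_mul_eq_one_add_one_div {x : ℝ} (hx : 1 < x) :
    ((x - 1) - (x - 1) / (x + 1)) / ((1 + (x - 1)) * ((x - 1) / (x + 1)) - (x - 1) / (x + 1))
      = 1 + 1 / (x - 1) := by
  have hx1 : x - 1 ≠ 0 := sub_ne_zero.2 hx.ne'
  have hx2 : x + 1 ≠ 0 := by linarith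
  have hden : (1 + (x - 1)) * ((x - 1) / (x + 1)) - (x - 1) / (x + 1) = (x - 1) ^ 2 / (x + 1) := by
    field_simp
    ring
  rw [hden]
  field_simp
  ring

lemma one_add_inv_le_one_add_one_div_sub_one {x : ℝ} (hx : 1 < x) :
    1 + x⁻¹ ≤ 1 + 1 / (x - 1) := by
  rw [one_div]
  gcongr
  linarith

theorem stmt18 (ℓ L : ℝ) (hℓ : 0 < ℓ) (hℓL : ℓ < L)
    (ρ θ ν ξsq : ℝ)
    (hρ : ρ = Real.sqrt (L / ℓ) - 1)
    (hθ : θ = (Real.sqrt L - Real.sqrt ℓ) / (Real.sqrt L + Real.sqrt ℓ))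
    (hν : ν = θ)
    (hξ : ξsq = (ρ - θ) / ((1 + ρ) * ν - θ)) :
    ξsq = 1 + 1 / (Real.sqrt (L / ℓ) - 1) ∧ 1 + Real.sqrt (ℓ / L) ≤ ξsq := by
  have hx := Real.one_lt_sqrt_div hℓ hℓL
  have hξ_eq : ξsq = 1 + 1 / (√(L / ℓ) - 1) := by
    rw [hξ, hν, hθ, hρ, Real.sqrt_sub_sqrt_div_sqrt_add_sqrt L hℓ]
    exact div_sub_div_mul_eq_one_add_one_div hx
  refine ⟨hξ_eq, ?_⟩
  rw [hξ_eq, Real.sqrt_div_eq_inv_sqrt_div]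
  exact one_add_inv_le_one_add_one_div_sub_one hx
end
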